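/- arXiv:2510.17775 — 5 statements merged into one kernel-verified Lean document; each statement's English description precedes it below -/
import Mathlib

section
/- Theorem 3.1(i) (MRA representation of MTD patches): Under the 1D MTD model with geometric placements, the sequence of patches {Z_k}_{k=1}^M extracted from the measurement Z can be written as Z_k = P(g_k · X̄) + ε_k, where the group elements g_k = (g_k^{(1)}, g_k^{(2)}) belong to G = ℤ_{2L} × ℤ_{2L} and are determined by the placement parameters {t_i}, X̄ = (X̃, X̃) is the lifted zero-padded signal, P is the projection operator, and {ε_k}_{k=1}^M are i.i.d. N(0, σ²I_L) noise vectors. -/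
/-!
Patch `k` is the window `[kL, kL + L)` of the measurement. Occurrences are at least `L` apart,
so at most one starts in `[kL - L, kL)` (its tail is visible in the patch) and at most one
starts in `[kL, kL + L)` (its head is visible). A copy of `X` at integer offset `d ∈ [-L, L]`
from the window start, read on the window, is the cyclic shift of the padded signal `X̃` by `d`
read on `[0, L)`: whatever wraps around lands in the zero half of `X̃`. So `g_k` records the
two offsets. The noise patches are the `L·M` i.i.d. coordinates of `ε` regrouped into `M`
blocks of `L`, hence i.i.d. `N(0, σ² I_L)`.
-/

open MeasureTheory ProbabilityTheory Filter Finset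
open scoped ENNReal ProbabilityTheory

noncomputable section

namespace MTD1D

/-- The group `G = ℤ_{2L} × ℤ_{2L}`. -/
abbrev G (L : ℕ) := ZMod (2*L) × ZMod (2*L)

/-- The zero-padded signal `X̃ = (X, 0_L) ∈ ℝ^{2L}`, indexed by `ℤ_{2L}`. -/
def padSig (L : ℕ) (X : Fin L → ℝ) : ZMod (2*L) → ℝ :=
  fun ξ => if h : ξ.val < L then X ⟨ξ.val, h⟩ else 0

/-- The lifted signal `X̄ = (X̃, X̃)`. -/
def XbarSig (L : ℕ) (X : Fin L → ℝ) : (ZMod (2*L) → ℝ) × (ZMod (2*L) → ℝ) :=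
  (padSig L X, padSig L X)

/-- Cyclic shift: `(g · v)[ξ] = v[ξ - g mod 2L]`. -/
def shiftSig (L : ℕ) (g : ZMod (2*L)) (v : ZMod (2*L) → ℝ) : ZMod (2*L) → ℝ :=
  fun ξ => v (ξ - g)

/-- Componentwise action of `G = ℤ_{2L} × ℤ_{2L}` on `ℝ^{2L} × ℝ^{2L}`. -/
def actSig (L : ℕ) (g : G L) (v : (ZMod (2*L) → ℝ) × (ZMod (2*L) → ℝ)) :
    (ZMod (2*L) → ℝ) × (ZMod (2*L) → ℝ) :=
  (shiftSig L g.1 v.1, shiftSig L g.2 v.2)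

/-- Projection `P(X̃₀, X̃₁) = P₀X̃₀ + P₁X̃₁`: the last `L` entries of `X̃₀`
plus the first `L` entries of `X̃₁`. -/
def projSig (L : ℕ) (v : (ZMod (2*L) → ℝ) × (ZMod (2*L) → ℝ)) : Fin L → ℝ :=
  fun ξ => v.1 ((ξ.val : ZMod (2*L)) + (L : ZMod (2*L))) + v.2 (ξ.val : ZMod (2*L))

/-- Zero-padded signal evaluation on ℕ (used to zero-pad placed signal copies). -/
def padNat (L : ℕ) (X : Fin L → ℝ) (n : ℕ) : ℝ :=
  if h : n < L then X ⟨n, h⟩ else 0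

/-- The index in the long measurement of the `ξ`-th pixel of the `k`-th patch. -/
def patchIdx (L M : ℕ) (k : Fin M) (ξ : Fin L) : Fin (L*M) :=
  ⟨k.val * L + ξ.val, by
    have hk : k.val + 1 ≤ M := k.isLt
    calc k.val * L + ξ.val < k.val * L + L := by omega
      _ = (k.val + 1) * L := by ring
      _ ≤ M * L := Nat.mul_le_mul hk (le_refl L)
      _ = L * M := Nat.mul_comm M L⟩

/-- The law `N(0, σ² I_n)` on `ℝ^n`. -/
def gaussPi (n : ℕ) (σ : ℝ) : Measure (Fin n → ℝ) :=
  Measure.pi fun _ => gaussianReal 0 (σ^2).toNNReal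

end MTD1D

theorem Finset.sum_filter_eq_dite {ι M : Type*} [AddCommMonoid M] (s : Finset ι) (p : ι → Prop)
    [DecidablePred p] (f : ι → M) (hp : ∀ i ∈ s, ∀ j ∈ s, p i → p j → i = j) :
    ∑ i ∈ s with p i, f i = if h : ∃ i ∈ s, p i then f h.choose else 0 := by
  split_ifs with h
  · obtain ⟨hmem, hpi⟩ := h.choose_spec
    refine sum_eq_single_of_mem _ (mem_filter.2 ⟨hmem, hpi⟩) fun j hj hne => ?_
    rw [mem_filter] at hj
    exact absurd (hp j hj.1 _ hmem hj.2 hpi) hne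
  · refine sum_eq_zero fun i hi => ?_
    rw [mem_filter] at hi
    exact absurd ⟨i, hi⟩ h

section Blocks

variable {Ω ι κ η β : Type*} [MeasurableSpace Ω] [MeasurableSpace β] {μ : Measure Ω}

theorem map_blocks_eq_pi_pi [Fintype ι] [Fintype κ] [Fintype η] {ε : Ω → ι → β}
    (hε : Measurable ε) {ν : Measure β} [IsProbabilityMeasure ν]
    (hlaw : μ.map ε = Measure.pi fun _ => ν) (e : κ × η ≃ ι) :
    μ.map (fun ω k j => ε ω (e (k, j))) = Measure.pi fun _ : κ => Measure.pi fun _ : η => ν := by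
  have hreindex : (fun f : ι → β => fun p => f (e p)) =
      MeasurableEquiv.piCongrLeft (fun _ => β) e.symm := by
    funext f p
    simp [MeasurableEquiv.coe_piCongrLeft, Equiv.piCongrLeft_apply_eq_cast]
  have hfactor : (fun ω k j => ε ω (e (k, j))) =
      MeasurableEquiv.curry κ η β ∘ (fun f : ι → β => fun p => f (e p)) ∘ ε := rfl
  rw [hfactor, ← Measure.map_map (by fun_prop) (by rw [hreindex]; fun_prop),
    ← Measure.map_map (by rw [hreindex]; fun_prop) hε, hlaw, hreindex,
    (measurePreserving_piCongrLeft (fun _ : κ × η => ν) e.symm).map_eq,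
    ← Measure.infinitePi_eq_pi, Measure.infinitePi_map_curry (fun (_ : κ) (_ : η) => ν)]
  simp only [Measure.infinitePi_eq_pi]

variable [Fintype κ] {Y : κ → Ω → β} {ν : Measure β} [IsProbabilityMeasure ν]

theorem map_eq_of_map_fun_eq_pi (hY : ∀ k, Measurable (Y k))
    (h : μ.map (fun ω k => Y k ω) = Measure.pi fun _ => ν) (k : κ) : μ.map (Y k) = ν := by
  rw [← (measurePreserving_eval (fun _ : κ => ν) k).map_eq, ← h,
    Measure.map_map (measurable_pi_apply k) (measurable_pi_lambda _ hY)]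
  rfl

theorem iIndepFun_of_map_fun_eq_pi [IsProbabilityMeasure μ] (hY : ∀ k, Measurable (Y k))
    (h : μ.map (fun ω k => Y k ω) = Measure.pi fun _ => ν) : iIndepFun Y μ := by
  rw [iIndepFun_iff_map_fun_eq_pi_map fun k => (hY k).aemeasurable, h]
  simp only [map_eq_of_map_fun_eq_pi hY h]

end Blocks

namespace MTD1D

instance (n : ℕ) (σ : ℝ) : IsProbabilityMeasure (gaussPi n σ) := by
  unfold gaussPi
  infer_instance

def padInt (L : ℕ) (X : Fin L → ℝ) (m : ℤ) : ℝ :=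
  if 0 ≤ m then padNat L X m.toNat else 0

open Classical in
def occurrenceOffset (s : Finset ℕ) (d : ℕ → ℤ) (lo hi dflt : ℤ) : ℤ :=
  if h : ∃ i ∈ s, d i ∈ Set.Ico lo hi then d h.choose else dflt

/-- The tail copy seen by a window sits at an offset in `[-L, 0)`, the head copy at one in
`[0, L)`; a missing copy gets the offset `-L` resp. `L`, where it misses the window. The tail
offset is shifted by `L` because `projSig` reads the first component from index `L` on. -/
def windowShift (L : ℕ) (s : Finset ℕ) (d : ℕ → ℤ) : G L :=
  (((L + occurrenceOffset s d (-L) 0 (-L) : ℤ) : ZMod (2 * L)),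
    ((occurrenceOffset s d 0 L L : ℤ) : ZMod (2 * L)))

def Separated (L : ℕ) (d : ℕ → ℤ) : Prop := ∀ i j, i < j → d i + L ≤ d j

theorem occurrenceOffset_mem_Icc {s : Finset ℕ} {d : ℕ → ℤ} {lo hi dflt : ℤ}
    (hdflt : dflt ∈ Set.Icc lo hi) : occurrenceOffset s d lo hi dflt ∈ Set.Icc lo hi := by
  unfold occurrenceOffset
  split_ifs with h
  · exact Set.Ico_subset_Icc_self h.choose_spec.2
  · exact hdflt

open Classical in
theorem sum_filter_eq_occurrenceOffset {M : Type*} [AddCommMonoid M] {s : Finset ℕ}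
    {d : ℕ → ℤ} {lo hi dflt : ℤ}
    (huniq : ∀ i ∈ s, ∀ j ∈ s, d i ∈ Set.Ico lo hi → d j ∈ Set.Ico lo hi → i = j)
    {f : ℤ → M} (hf : f dflt = 0) :
    ∑ i ∈ s with d i ∈ Set.Ico lo hi, f (d i) = f (occurrenceOffset s d lo hi dflt) := by
  rw [Finset.sum_filter_eq_dite _ _ _ huniq, occurrenceOffset]
  split_ifs <;> simp [hf]

theorem Separated.eq_of_mem_Ico {L : ℕ} {d : ℕ → ℤ} (hd : Separated L d) {lo : ℤ} {i j : ℕ}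
    (hi : d i ∈ Set.Ico lo (lo + L)) (hj : d j ∈ Set.Ico lo (lo + L)) : i = j := by
  obtain ⟨hi₁, hi₂⟩ := hi
  obtain ⟨hj₁, hj₂⟩ := hj
  rcases lt_trichotomy i j with h | h | h
  · linarith [hd i j h]
  · exact h
  · linarith [hd j i h]

theorem Separated.of_succ {L : ℕ} {t : ℕ → ℕ} (ht : ∀ i, t i + L ≤ t (i + 1)) (a : ℤ) :
    Separated L (fun i => (t i : ℤ) - a) := by
  intro i j hij
  induction j, hij using Nat.le_induction with
  | base => have := ht i; simp only [Nat.succ_eq_add_one]; omega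
  | succ j _ ih => have := ht j; simp only at ih ⊢; omega

section Signal

variable {L : ℕ} (X : Fin L → ℝ)

theorem padNat_of_le {n : ℕ} (hn : L ≤ n) : padNat L X n = 0 :=
  dif_neg (by omega)

theorem padInt_of_neg {m : ℤ} (hm : m < 0) : padInt L X m = 0 :=
  if_neg (by omega)

theorem padInt_of_le {m : ℤ} (hm : L ≤ m) : padInt L X m = 0 := by
  unfold padInt
  split_ifs
  · exact padNat_of_le X (by omega)
  · rfl

theorem ite_padNat_eq_padInt (s n : ℕ) :
    (if s ≤ n then padNat L X (n - s) else 0) = padInt L X ((n : ℤ) - s) := by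
  unfold padInt
  split_ifs with hsn hnonneg hnonneg
  · congr 1
    omega
  · omega
  · omega
  · rfl

theorem padSig_natCast {m : ℕ} (hm : m < 2 * L) :
    padSig L X (m : ZMod (2 * L)) = padNat L X m := by
  have : NeZero (2 * L) := ⟨by omega⟩
  simp only [padSig, padNat, ZMod.val_natCast_of_lt hm]

theorem padSig_intCast {m : ℤ} (hlo : -L ≤ m) (hhi : m < 2 * L) :
    padSig L X (m : ZMod (2 * L)) = padInt L X m := by
  rcases le_or_gt 0 m with hm | hm
  · lift m to ℕ using hm
    rw [Int.cast_natCast, padSig_natCast X (by omega)]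
    rfl
  · have hcast : (m : ZMod (2 * L)) = ((m + 2 * L).toNat : ℕ) := by
      have h0 : ((2 * L : ℕ) : ZMod (2 * L)) = 0 := ZMod.natCast_self _
      rw [← Int.cast_natCast, Int.toNat_of_nonneg (by omega)]
      push_cast at h0 ⊢
      rw [h0, add_zero]
    rw [hcast, padSig_natCast X (by omega), padInt_of_neg X hm, padNat_of_le X (by omega)]

theorem projSig_actSig_XbarSig {dT dH : ℤ} (hT : dT ∈ Set.Icc (-L : ℤ) L)
    (hH : dH ∈ Set.Icc (-L : ℤ) L) (ξ : Fin L) :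
    projSig L (actSig L (((L + dT : ℤ) : ZMod (2 * L)), ((dH : ℤ) : ZMod (2 * L)))
        (XbarSig L X)) ξ = padInt L X (ξ - dT) + padInt L X (ξ - dH) := by
  obtain ⟨hT₁, hT₂⟩ := hT
  obtain ⟨hH₁, hH₂⟩ := hH
  have hξ := ξ.isLt
  simp only [projSig, actSig, shiftSig, XbarSig]
  rw [← padSig_intCast X (m := ξ - dT) (by omega) (by omega),
    ← padSig_intCast X (m := ξ - dH) (by omega) (by omega)]
  push_cast
  ring_nf

open Classical in
theorem padInt_sub_eq_ite_add_ite (ξ : Fin L) (d : ℤ) :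
    padInt L X (ξ - d) = (if d ∈ Set.Ico (-L : ℤ) 0 then padInt L X (ξ - d) else 0)
      + (if d ∈ Set.Ico (0 : ℤ) L then padInt L X (ξ - d) else 0) := by
  have hξ := ξ.isLt
  simp only [Set.mem_Ico]
  split_ifs with h₁ h₂ h₂
  · omega
  · rw [add_zero]
  · rw [zero_add]
  · rcases lt_or_ge d 0 with h | h
    · rw [padInt_of_le X (by omega), add_zero]
    · rw [padInt_of_neg X (by omega), add_zero]

theorem Separated.sum_padInt_eq_projSig {d : ℕ → ℤ} (hd : Separated L d) (s : Finset ℕ)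
    (ξ : Fin L) :
    ∑ i ∈ s, padInt L X (ξ - d i) = projSig L (actSig L (windowShift L s d) (XbarSig L X)) ξ := by
  classical
  have hξ := ξ.isLt
  have huniq (lo : ℤ) : ∀ i ∈ s, ∀ j ∈ s, d i ∈ Set.Ico lo (lo + L) →
      d j ∈ Set.Ico lo (lo + L) → i = j := fun _ _ _ _ hi hj => hd.eq_of_mem_Ico hi hj
  rw [sum_congr rfl fun i _ => padInt_sub_eq_ite_add_ite X ξ (d i), sum_add_distrib,
    ← sum_filter, ← sum_filter,
    sum_filter_eq_occurrenceOffset (f := fun e => padInt L X (ξ - e)) (dflt := -L)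
      (by simpa using huniq (-L)) (padInt_of_le X (by omega)),
    sum_filter_eq_occurrenceOffset (f := fun e => padInt L X (ξ - e)) (dflt := L)
      (by simpa using huniq 0) (padInt_of_neg X (by omega)),
    windowShift, projSig_actSig_XbarSig X]
  · exact Set.Icc_subset_Icc le_rfl (by omega) (occurrenceOffset_mem_Icc (by simp))
  · exact Set.Icc_subset_Icc (by omega) le_rfl (occurrenceOffset_mem_Icc (by simp))

theorem ite_padNat_patchIdx {M : ℕ} (k : Fin M) (ξ : Fin L) (s : ℕ) :
    (if s ≤ (patchIdx L M k ξ).val then padNat L X ((patchIdx L M k ξ).val - s) else 0)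
      = padInt L X (ξ - ((s : ℤ) - k * L)) := by
  rw [ite_padNat_eq_padInt]
  congr 1
  simp only [patchIdx]
  push_cast
  ring

end Signal

def patchEquiv (L M : ℕ) : Fin M × Fin L ≃ Fin (L * M) :=
  finProdFinEquiv.trans (finCongr (Nat.mul_comm M L))

theorem patchEquiv_apply (L M : ℕ) (k : Fin M) (ξ : Fin L) :
    patchEquiv L M (k, ξ) = patchIdx L M k ξ :=
  Fin.ext (by simp [patchEquiv, patchIdx, finProdFinEquiv]; ring)

theorem mtd_patches_MRA_representation_general
    (L M : ℕ) (σ : ℝ)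
    {Ω : Type} [MeasureSpace Ω] [IsProbabilityMeasure (ℙ : Measure Ω)]
    (X : Fin L → ℝ)
    -- i.i.d. geometric gaps between consecutive signal occurrences
    (gap : ℕ → Ω → ℕ)
    -- placement positions: t_1 ~ Ge(λ), t_i − t_{i−1} − L ~ Ge(λ)
    (t : ℕ → Ω → ℕ)
    (htS : ∀ i ω, t (i+1) ω = t i ω + L + gap (i+1) ω)
    -- measurement noise ε ~ N(0, σ² I_{LM}), independent of the placements
    (ε : Ω → Fin (L*M) → ℝ) (hεMeas : Measurable ε)
    (hεLaw : Measure.map ε ℙ = gaussPi (L*M) σ)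
    -- the MTD measurement Z = Σ_i S(t_i) * X + ε (occurrences with t_i > L(M−1)
    -- contribute nothing inside the window, matching q = max{i : t_i ≤ L(M−1)})
    (Z : Ω → Fin (L*M) → ℝ)
    (hZ : ∀ ω ξ, Z ω ξ =
      (∑ i ∈ Finset.range M,
        if t i ω ≤ ξ.val then padNat L X (ξ.val - t i ω) else 0) + ε ω ξ) :
    -- conclusion: MRA representation of the patches
    ∃ (g : Fin M → Ω → G L) (εp : Fin M → Ω → Fin L → ℝ),
      (∀ k, ∃ φ : (ℕ → ℕ) → G L, ∀ ω, g k ω = φ (fun i => t i ω)) ∧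
      (∀ k ω ξ, Z ω (patchIdx L M k ξ)
          = projSig L (actSig L (g k ω) (XbarSig L X)) ξ + εp k ω ξ) ∧
      (∀ k, Measurable (εp k)) ∧
      (∀ k, Measure.map (εp k) ℙ = gaussPi L σ) ∧
      iIndepFun εp ℙ := by
  let shift (k : Fin M) (s : ℕ → ℕ) : G L := windowShift L (range M) fun i => (s i : ℤ) - k * L
  let εp (k : Fin M) (ω : Ω) (ξ : Fin L) : ℝ := ε ω (patchIdx L M k ξ)
  have hεpMeas : ∀ k, Measurable (εp k) := fun k => by fun_prop
  have hεpLaw : Measure.map (fun ω k => εp k ω) ℙ = Measure.pi fun _ : Fin M => gaussPi L σ := by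
    have h := map_blocks_eq_pi_pi hεMeas hεLaw (patchEquiv L M)
    simp only [patchEquiv_apply] at h
    exact h
  refine ⟨fun k ω => shift k fun i => t i ω, εp, fun k => ⟨shift k, fun _ => rfl⟩,
    fun k ω ξ => ?_, hεpMeas, map_eq_of_map_fun_eq_pi hεpMeas hεpLaw,
    iIndepFun_of_map_fun_eq_pi hεpMeas hεpLaw⟩
  have hsep : Separated L fun i => (t i ω : ℤ) - k * L :=
    Separated.of_succ (fun i => by rw [htS]; omega) _
  rw [hZ, ← hsep.sum_padInt_eq_projSig]
  simp only [ite_padNat_patchIdx, εp]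

/-- **Theorem 3.1(i)**: the MTD patches admit an MRA representation
`Z_k = P(g_k · X̄) + ε_k`, with `g_k ∈ ℤ_{2L} × ℤ_{2L}` determined by the placements
`{t_i}` and `ε_k` i.i.d. `N(0, σ² I_L)`. -/
theorem mtd_patches_MRA_representation
    (L M : ℕ) (hL : 0 < L) (hM : 0 < M) (σ lam : ℝ) (hσ : 0 < σ)
    (hlam : lam ∈ Set.Ioo (0:ℝ) 1)
    {Ω : Type} [MeasureSpace Ω] [IsProbabilityMeasure (ℙ : Measure Ω)]
    (X : Fin L → ℝ)
    -- i.i.d. geometric gaps between consecutive signal occurrences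
    (gap : ℕ → Ω → ℕ) (hgapMeas : ∀ i, Measurable (gap i))
    (hgapLaw : ∀ i k, ℙ {ω | gap i ω = k} = ENNReal.ofReal ((1-lam)^k * lam))
    (hgapIndep : iIndepFun gap ℙ)
    -- placement positions: t_1 ~ Ge(λ), t_i − t_{i−1} − L ~ Ge(λ)
    (t : ℕ → Ω → ℕ)
    (ht0 : ∀ ω, t 0 ω = gap 0 ω)
    (htS : ∀ i ω, t (i+1) ω = t i ω + L + gap (i+1) ω)
    -- measurement noise ε ~ N(0, σ² I_{LM}), independent of the placements
    (ε : Ω → Fin (L*M) → ℝ) (hεMeas : Measurable ε)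
    (hεLaw : Measure.map ε ℙ = gaussPi (L*M) σ)
    (hεIndep : IndepFun (fun ω => fun i => gap i ω) ε ℙ)
    -- the MTD measurement Z = Σ_i S(t_i) * X + ε (occurrences with t_i > L(M−1)
    -- contribute nothing inside the window, matching q = max{i : t_i ≤ L(M−1)})
    (Z : Ω → Fin (L*M) → ℝ)
    (hZ : ∀ ω ξ, Z ω ξ =
      (∑ i ∈ Finset.range M,
        if t i ω ≤ ξ.val then padNat L X (ξ.val - t i ω) else 0) + ε ω ξ) :
    -- conclusion: MRA representation of the patches
    ∃ (g : Fin M → Ω → G L) (εp : Fin M → Ω → Fin L → ℝ),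
      (∀ k, ∃ φ : (ℕ → ℕ) → G L, ∀ ω, g k ω = φ (fun i => t i ω)) ∧
      (∀ k ω ξ, Z ω (patchIdx L M k ξ)
          = projSig L (actSig L (g k ω) (XbarSig L X)) ξ + εp k ω ξ) ∧
      (∀ k, Measurable (εp k)) ∧
      (∀ k, Measure.map (εp k) ℙ = gaussPi L σ) ∧
      iIndepFun εp ℙ :=
  mtd_patches_MRA_representation_general L M σ X gap t htS ε hεMeas hεLaw Z hZ

end MTD1D
end
end

section
/- Stationarity of ρ: For every λ ∈ (0,1) and L ∈ ℕ, the probability vector ρ on {0,…,L} defined by ρ(x) = λ/(1+(L−1)λ) for 0 ≤ x ≤ L−1 and ρ(L) = (1−λ)/(1+(L−1)λ) is a stationary distribution of the transition matrix P_{λ,L}, i.e., ρ P_{λ,L} = ρ (as a left eigenvector with eigenvalue 1), and ρ sums to 1. -/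
/-!
Normalisation aside, stationarity is a polynomial identity for the weights
`w = (λ, …, λ, 1 − λ)`. Writing `q = 1 − λ`, column `j < L` receives `λ · λ ∑_{i ≤ j} q^{j−i}
= λ (1 − q^{j+1})` from the rows `i < L` and `q · q^j λ` from row `L`, a total of `λ`;
column `L` receives `λ ∑_{i < L} q^{L−i} = q (1 − q^L)` and `q · q^L`, a total of `q`.
Dividing by `∑ w = 1 + (L − 1) λ`, positive for `λ ∈ (0,1)`, gives `ρ`.
-/

open Finset

noncomputable section

namespace MTD1D

/-- The transition matrix `P_{λ,L}` on the states `{0,…,L}`: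
for a row `i ∈ {0,…,L−1}` the entries are `(1−λ)^{j−i} λ` for `i ≤ j ≤ L−1`,
`(1−λ)^{L−i}` for `j = L`, and `0` for `j < i`; row `L` equals row `0`. -/
def Pmat (L : ℕ) (lam : ℝ) (i j : Fin (L+1)) : ℝ :=
  let i' : ℕ := if i.val = L then 0 else i.val
  if j.val = L then (1 - lam)^(L - i')
  else if i' ≤ j.val then (1 - lam)^(j.val - i') * lam
  else 0

/-- The vector `ρ` on `{0,…,L}`: `ρ(x) = λ/(1+(L−1)λ)` for `x < L`,
`ρ(L) = (1−λ)/(1+(L−1)λ)`. -/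
def rho (L : ℕ) (lam : ℝ) (x : Fin (L+1)) : ℝ :=
  if x.val = L then (1 - lam) / (1 + ((L:ℝ) - 1) * lam)
  else lam / (1 + ((L:ℝ) - 1) * lam)

theorem geom_sum_one_sub_pow_mul {R : Type*} [CommRing R] (a : R) (n : ℕ) :
    ∑ i ∈ range n, (1 - a) ^ (n - 1 - i) * a = 1 - (1 - a) ^ n := by
  have h := geom_sum₂_mul (1 : R) (1 - a) n
  simp only [one_pow, one_mul, sub_sub_cancel] at h
  rw [← h, sum_mul]

variable {L : ℕ} {lam : ℝ}

def rhoWeight (L : ℕ) (lam : ℝ) (x : Fin (L+1)) : ℝ :=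
  if x.val = L then 1 - lam else lam

theorem rho_eq_rhoWeight_div (x : Fin (L+1)) :
    rho L lam x = rhoWeight L lam x / (1 + ((L:ℝ) - 1) * lam) := by
  unfold rho rhoWeight
  split_ifs <;> rfl

theorem sum_rhoWeight : ∑ x, rhoWeight L lam x = 1 + ((L:ℝ) - 1) * lam := by
  simp only [rhoWeight, Fin.sum_univ_castSucc, Fin.val_castSucc, Fin.is_lt, ne_of_lt, ↓reduceIte,
    sum_const, card_univ, Fintype.card_fin, nsmul_eq_mul, Fin.val_last]
  ring

theorem Pmat_castSucc (i : Fin L) (j : Fin (L+1)) :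
    Pmat L lam i.castSucc j =
      if j.val = L then (1 - lam) ^ (L - i)
      else if i.val ≤ j.val then (1 - lam) ^ (j.val - i) * lam else 0 := by
  simp [Pmat, i.is_lt.ne]

theorem Pmat_last (j : Fin (L+1)) :
    Pmat L lam (Fin.last L) j = if j.val = L then (1 - lam) ^ L else (1 - lam) ^ j.val * lam := by
  simp [Pmat]

theorem sum_rhoWeight_mul_Pmat (j : Fin (L+1)) :
    ∑ i, rhoWeight L lam i * Pmat L lam i j =
      lam * ∑ i : Fin L, Pmat L lam i.castSucc j + (1 - lam) * Pmat L lam (Fin.last L) j := by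
  simp [Fin.sum_univ_castSucc, rhoWeight, Fin.is_lt, ne_of_lt, mul_sum]

theorem sum_Pmat_castSucc_of_lt (j : Fin (L+1)) (hj : j.val < L) :
    ∑ i : Fin L, Pmat L lam i.castSucc j = 1 - (1 - lam) ^ (j.val + 1) := by
  simp only [Pmat_castSucc, hj.ne, if_false]
  rw [Fin.sum_univ_eq_sum_range (fun i => if i ≤ j.val then (1 - lam) ^ (j.val - i) * lam else 0),
    ← sum_filter, ← geom_sum_one_sub_pow_mul, Nat.add_sub_cancel]
  congr 1
  ext i
  simp only [mem_filter, mem_range]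
  omega

theorem mul_sum_Pmat_castSucc_last :
    lam * ∑ i : Fin L, Pmat L lam i.castSucc (Fin.last L) = (1 - lam) * (1 - (1 - lam) ^ L) := by
  simp only [Pmat_castSucc, Fin.val_last, if_true]
  rw [Fin.sum_univ_eq_sum_range (fun i => (1 - lam) ^ (L - i)), ← geom_sum_one_sub_pow_mul, mul_sum, mul_sum]
  refine sum_congr rfl fun i hi => ?_
  rw [show L - i = L - 1 - i + 1 by have := mem_range.1 hi; omega]
  ring

theorem sum_rhoWeight_mul_Pmat_eq (j : Fin (L+1)) :
    ∑ i, rhoWeight L lam i * Pmat L lam i j = rhoWeight L lam j := by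
  rw [sum_rhoWeight_mul_Pmat]
  induction j using Fin.lastCases with
  | last =>
    rw [mul_sum_Pmat_castSucc_last, Pmat_last]
    simp only [Fin.val_last, ↓reduceIte, rhoWeight]
    ring
  | cast k =>
    rw [sum_Pmat_castSucc_of_lt _ k.is_lt, Pmat_last]
    simp only [Fin.val_castSucc, k.is_lt.ne, ↓reduceIte, rhoWeight]
    ring

theorem rho_denom_pos (h0 : 0 < lam) (h1 : lam < 1) : 0 < 1 + ((L:ℝ) - 1) * lam := by
  nlinarith [mul_nonneg (Nat.cast_nonneg L : (0:ℝ) ≤ L) h0.le]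

/-- **Stationarity of `ρ`**: `ρ` is a probability vector and a left eigenvector of
`P_{λ,L}` with eigenvalue `1`, i.e. `ρ P_{λ,L} = ρ`. -/
theorem rho_stationary (L : ℕ) (lam : ℝ) (h0 : 0 < lam) (h1 : lam < 1) :
    (∑ x : Fin (L+1), rho L lam x = 1) ∧
    (∀ j : Fin (L+1), ∑ i : Fin (L+1), rho L lam i * Pmat L lam i j = rho L lam j) := by
  simp_rw [rho_eq_rhoWeight_div, div_mul_eq_mul_div, ← sum_div, sum_rhoWeight,
    sum_rhoWeight_mul_Pmat_eq]
  exact ⟨div_self (rho_denom_pos h0 h1).ne', fun _ => trivial⟩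

end MTD1D
end
end

section
/- Doeblin-type convergence for the auxiliary chain: For every λ ∈ (0,1) and L ∈ ℕ, the minorization constant of P_{λ,L} satisfies β := Σ_{j=0}^L min_{0≤i≤L} P_{λ,L}(i,j) = (1−λ)^{L−1}, and consequently for every k ≥ 0 and every initial state ω ∈ {0,…,L}, the total variation distance between the k-step distribution started at ω and ρ satisfies (1/2) Σ_{ω'=0}^L |(P_{λ,L}^k)(ω, ω') − ρ(ω')| ≤ (1 − (1−λ)^{L−1})^k. -/
/-!
Doeblin's argument. Let `m j = minᵢ P i j` and `β = ∑ⱼ m j`. If `∑ u = 0`, subtracting `m` from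
every row of `P` does not change `u ᵥ* P`, and what remains is nonnegative with row sums `1 - β`;
hence `‖u ᵥ* P‖₁ ≤ (1 - β) ‖u‖₁`. As `ρ` is stationary, row `w` of `P ^ k` minus `ρ` is
`(δ_w - ρ) ᵥ* P ^ k`, and `‖δ_w - ρ‖₁ ≤ 2`.

For `P_{λ,L}` the column minima are `(1-λ)^L` in column `L` and `(1-λ)^{L-1} λ` in column `L-1`,
both attained in row `0`, while each column `j < L - 1` has the entry `0` in row `j + 1`. Hence
`β = (1-λ)^{L-1}`; for `L = 0` this reads `β = 1`, the exponent `L - 1` being truncated to `0`.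
-/

open Finset

noncomputable section

namespace MTD1D

/-- `P_{λ,L}` as a matrix (so that matrix powers are available). -/
def PmatM (L : ℕ) (lam : ℝ) : Matrix (Fin (L+1)) (Fin (L+1)) ℝ :=
  Matrix.of (Pmat L lam)

end MTD1D

section GeomSum

variable {R : Type*} [CommRing R]

theorem geom_sum_one_sub_mul (a : R) (n : ℕ) :
    ∑ i ∈ range n, (1 - a) ^ i * a = 1 - (1 - a) ^ n := by
  simpa [sub_sub_cancel, ← sum_mul] using geom_sum_mul_neg (1 - a) n

theorem geom_sum_one_sub_mul_reflect (a : R) (n : ℕ) :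
    ∑ i ∈ range n, (1 - a) ^ (n - 1 - i) * a = 1 - (1 - a) ^ n := by
  rw [sum_range_reflect (fun i => (1 - a) ^ i * a), geom_sum_one_sub_mul]

theorem sum_range_ite_le_geom (a : R) (s n : ℕ) :
    ∑ i ∈ range n, (if s ≤ i then (1 - a) ^ (i - s) * a else 0) = 1 - (1 - a) ^ (n - s) := by
  rw [← sum_filter, show (range n).filter (s ≤ ·) = Ico s n by ext; simp; omega,
    sum_Ico_eq_sum_range, ← geom_sum_one_sub_mul]
  simp

theorem sum_range_ite_ge_geom (a : R) {j n : ℕ} (hj : j < n) :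
    ∑ i ∈ range n, (if i ≤ j then (1 - a) ^ (j - i) * a else 0) = 1 - (1 - a) ^ (j + 1) := by
  rw [← sum_filter, show (range n).filter (· ≤ j) = range (j + 1) by ext; simp; omega,
    ← geom_sum_one_sub_mul_reflect]
  simp

theorem mul_sum_range_pow_sub (a : R) (n : ℕ) :
    a * ∑ i ∈ range n, (1 - a) ^ (n - i) = (1 - a) * (1 - (1 - a) ^ n) := by
  rw [← geom_sum_one_sub_mul_reflect, mul_sum, mul_sum]
  refine sum_congr rfl fun i hi => ?_
  rw [show n - i = n - 1 - i + 1 by simp at hi; omega]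
  ring

end GeomSum

namespace Matrix

variable {ι α : Type*} [Fintype ι] [Semiring α]

def minorizationConst [Nonempty ι] (P : Matrix ι ι ℝ) : ℝ :=
  ∑ j, univ.inf' univ_nonempty fun i => P i j

theorem minorizationConst_le_one [Nonempty ι] {P : Matrix ι ι ℝ} (hP : ∀ i, ∑ j, P i j = 1) :
    minorizationConst P ≤ 1 := by
  obtain ⟨i⟩ := ‹Nonempty ι›
  calc minorizationConst P ≤ ∑ j, P i j := sum_le_sum fun j _ => inf'_le _ (mem_univ i)
    _ = 1 := hP i

theorem sum_vecMul_of_sum_row_eq_one {P : Matrix ι ι α} (hP : ∀ i, ∑ j, P i j = 1)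
    (u : ι → α) : ∑ j, (u ᵥ* P) j = ∑ i, u i := by
  simp only [vecMul, dotProduct]
  rw [sum_comm]
  simp only [← mul_sum, hP, mul_one]

theorem sum_abs_vecMul_le [Nonempty ι] {P : Matrix ι ι ℝ} (hP : ∀ i, ∑ j, P i j = 1)
    {u : ι → ℝ} (hu : ∑ i, u i = 0) :
    ∑ j, |(u ᵥ* P) j| ≤ (1 - minorizationConst P) * ∑ i, |u i| := by
  set m : ι → ℝ := fun j => univ.inf' univ_nonempty fun i => P i j
  have hm : ∀ i j, m j ≤ P i j := fun i j => inf'_le _ (mem_univ i)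
  have hshift : ∀ j, (u ᵥ* P) j = ∑ i, u i * (P i j - m j) := fun j => by
    simp only [vecMul, dotProduct, mul_sub, sum_sub_distrib, ← sum_mul, hu, zero_mul, sub_zero]
  calc ∑ j, |(u ᵥ* P) j| ≤ ∑ j, ∑ i, |u i| * (P i j - m j) := by
        refine sum_le_sum fun j _ => (hshift j ▸ abs_sum_le_sum_abs _ _).trans
          (sum_le_sum fun i _ => ?_)
        rw [abs_mul, abs_of_nonneg (sub_nonneg.2 (hm i j))]
    _ = ∑ i, |u i| * (∑ j, P i j - ∑ j, m j) := by
        rw [sum_comm]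
        simp only [mul_sub, sum_sub_distrib, mul_sum]
    _ = (1 - minorizationConst P) * ∑ i, |u i| := by
        simp only [hP, minorizationConst, m, ← sum_mul, mul_comm]

theorem sum_abs_vecMul_pow_le [DecidableEq ι] [Nonempty ι] {P : Matrix ι ι ℝ}
    (hP : ∀ i, ∑ j, P i j = 1) {u : ι → ℝ} (hu : ∑ i, u i = 0) (k : ℕ) :
    ∑ j, |(u ᵥ* P ^ k) j| ≤ (1 - minorizationConst P) ^ k * ∑ i, |u i| := by
  induction k generalizing u with
  | zero => simp
  | succ k ih =>
    calc ∑ j, |(u ᵥ* P ^ (k + 1)) j| = ∑ j, |(u ᵥ* P ᵥ* P ^ k) j| := by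
          rw [pow_succ', vecMul_vecMul]
      _ ≤ (1 - minorizationConst P) ^ k * ∑ j, |(u ᵥ* P) j| :=
          ih (by rw [sum_vecMul_of_sum_row_eq_one hP, hu])
      _ ≤ (1 - minorizationConst P) ^ k * ((1 - minorizationConst P) * ∑ i, |u i|) := by
          have hβ : 0 ≤ 1 - minorizationConst P := sub_nonneg.2 (minorizationConst_le_one hP)
          gcongr
          exact sum_abs_vecMul_le hP hu
      _ = (1 - minorizationConst P) ^ (k + 1) * ∑ i, |u i| := by ring

theorem vecMul_pow_eq_self [DecidableEq ι] {P : Matrix ι ι α} {π : ι → α} (hπ : π ᵥ* P = π)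
    (k : ℕ) : π ᵥ* P ^ k = π := by
  induction k with
  | zero => simp
  | succ k ih => rw [pow_succ, ← vecMul_vecMul, ih, hπ]

theorem half_sum_abs_pow_sub_le [DecidableEq ι] [Nonempty ι] {P : Matrix ι ι ℝ} {π : ι → ℝ}
    (hP : ∀ i, ∑ j, P i j = 1) (hπ : π ᵥ* P = π) (hπ0 : ∀ i, 0 ≤ π i) (hπ1 : ∑ i, π i = 1)
    (k : ℕ) (w : ι) :
    (1 / 2 : ℝ) * ∑ j, |(P ^ k) w j - π j| ≤ (1 - minorizationConst P) ^ k := by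
  set u : ι → ℝ := Pi.single w 1 - π
  have hu : ∑ i, u i = 0 := by simp [u, sum_sub_distrib, hπ1]
  have hrow : ∀ j, (P ^ k) w j - π j = (u ᵥ* P ^ k) j := fun j => by
    simp [u, sub_vecMul, vecMul_pow_eq_self hπ]
  have hu2 : ∑ i, |u i| ≤ 2 := by
    calc ∑ i, |u i| ≤ ∑ i, (|(Pi.single w 1 : ι → ℝ) i| + |π i|) :=
          sum_le_sum fun i _ => abs_sub _ _
      _ = 2 := by
          norm_num [Pi.single_apply, apply_ite, sum_add_distrib, abs_of_nonneg (hπ0 _), hπ1]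
  have hβ : 0 ≤ (1 - minorizationConst P) ^ k :=
    pow_nonneg (sub_nonneg.2 (minorizationConst_le_one hP)) k
  calc (1 / 2 : ℝ) * ∑ j, |(P ^ k) w j - π j| = (1 / 2) * ∑ j, |(u ᵥ* P ^ k) j| := by
        simp only [hrow]
    _ ≤ (1 / 2) * ((1 - minorizationConst P) ^ k * ∑ i, |u i|) := by
        gcongr; exact sum_abs_vecMul_pow_le hP hu k
    _ ≤ (1 - minorizationConst P) ^ k := by nlinarith

end Matrix

namespace MTD1D

open Matrix

variable {L : ℕ} {lam : ℝ}

theorem Pmat_castSucc_last (i : Fin L) :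
    Pmat L lam i.castSucc (Fin.last L) = (1 - lam) ^ (L - i) := by
  simp [Pmat, i.isLt.ne]

theorem Pmat_castSucc_castSucc (i j : Fin L) :
    Pmat L lam i.castSucc j.castSucc =
      if (i : ℕ) ≤ j then (1 - lam) ^ (j - i : ℕ) * lam else 0 := by
  simp [Pmat, i.isLt.ne, j.isLt.ne]

theorem Pmat_last_last : Pmat L lam (Fin.last L) (Fin.last L) = (1 - lam) ^ L := by
  simp [Pmat]

theorem Pmat_last_castSucc (j : Fin L) :
    Pmat L lam (Fin.last L) j.castSucc = (1 - lam) ^ (j : ℕ) * lam := by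
  simp [Pmat, j.isLt.ne]

theorem Pmat_nonneg (h0 : 0 ≤ lam) (h1 : lam ≤ 1) (i j : Fin (L + 1)) : 0 ≤ Pmat L lam i j := by
  have : 0 ≤ 1 - lam := sub_nonneg.2 h1
  unfold Pmat
  split_ifs <;> positivity

theorem sum_Pmat_row (i : Fin (L + 1)) : ∑ j, Pmat L lam i j = 1 := by
  rw [Fin.sum_univ_castSucc]
  induction i using Fin.lastCases with
  | last =>
    simp only [Pmat_last_castSucc, Pmat_last_last]
    rw [Fin.sum_univ_eq_sum_range (fun n => (1 - lam) ^ n * lam), geom_sum_one_sub_mul]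
    ring
  | cast i =>
    simp only [Pmat_castSucc_castSucc, Pmat_castSucc_last]
    rw [Fin.sum_univ_eq_sum_range (fun n => if (i : ℕ) ≤ n then (1 - lam) ^ (n - i) * lam else 0),
      sum_range_ite_le_geom]
    ring

theorem rho_castSucc (i : Fin L) : rho L lam i.castSucc = lam / (1 + ((L : ℝ) - 1) * lam) := by
  simp [rho, i.isLt.ne]

theorem rho_last : rho L lam (Fin.last L) = (1 - lam) / (1 + ((L : ℝ) - 1) * lam) := by
  simp [rho]

theorem rho_vecMul_PmatM : rho L lam ᵥ* PmatM L lam = rho L lam := by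
  funext j
  simp only [vecMul, dotProduct, PmatM, of_apply]
  rw [Fin.sum_univ_castSucc]
  induction j using Fin.lastCases with
  | last =>
    simp only [rho_castSucc, rho_last, Pmat_castSucc_last, Pmat_last_last, ← mul_sum]
    rw [Fin.sum_univ_eq_sum_range (fun n => (1 - lam) ^ (L - n)) L]
    linear_combination (1 / (1 + ((L : ℝ) - 1) * lam)) * mul_sum_range_pow_sub lam L
  | cast j =>
    simp only [rho_castSucc, rho_last, Pmat_castSucc_castSucc, Pmat_last_castSucc, ← mul_sum]
    rw [Fin.sum_univ_eq_sum_range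
      (fun n => if n ≤ (j : ℕ) then (1 - lam) ^ ((j : ℕ) - n) * lam else 0) L]
    linear_combination (lam / (1 + ((L : ℝ) - 1) * lam)) * sum_range_ite_ge_geom lam j.isLt

theorem rho_nonneg (h0 : 0 ≤ lam) (h1 : lam ≤ 1) (x : Fin (L + 1)) : 0 ≤ rho L lam x := by
  have : 0 ≤ 1 + ((L : ℝ) - 1) * lam := by nlinarith [(Nat.cast_nonneg L : (0 : ℝ) ≤ L)]
  have : 0 ≤ 1 - lam := sub_nonneg.2 h1
  unfold rho
  split_ifs <;> positivity

theorem sum_rho (h0 : 0 ≤ lam) (h1 : lam < 1) : ∑ x, rho L lam x = 1 := by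
  have : 0 < 1 + ((L : ℝ) - 1) * lam := by nlinarith [(Nat.cast_nonneg L : (0 : ℝ) ≤ L)]
  simp only [Fin.sum_univ_castSucc, rho_castSucc, rho_last, sum_const, card_univ, Fintype.card_fin]
  rw [nsmul_eq_mul, mul_div_assoc', ← add_div, div_eq_one_iff_eq this.ne']
  ring

theorem inf'_Pmat_last (h0 : 0 ≤ lam) (h1 : lam ≤ 1) :
    univ.inf' univ_nonempty (fun i => Pmat L lam i (Fin.last L)) = (1 - lam) ^ L := by
  refine le_antisymm ((inf'_le _ (mem_univ (Fin.last L))).trans_eq Pmat_last_last)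
    (le_inf' _ _ fun i _ => ?_)
  induction i using Fin.lastCases with
  | last => rw [Pmat_last_last]
  | cast i =>
    rw [Pmat_castSucc_last]
    exact pow_le_pow_of_le_one (sub_nonneg.2 h1) (by linarith) (Nat.sub_le _ _)

theorem inf'_Pmat_castSucc (h0 : 0 ≤ lam) (h1 : lam ≤ 1) (j : Fin L) :
    univ.inf' univ_nonempty (fun i => Pmat L lam i j.castSucc) =
      if (j : ℕ) = L - 1 then (1 - lam) ^ (j : ℕ) * lam else 0 := by
  split_ifs with hj
  · refine le_antisymm ((inf'_le _ (mem_univ (Fin.last L))).trans_eq (Pmat_last_castSucc j))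
      (le_inf' _ _ fun i _ => ?_)
    induction i using Fin.lastCases with
    | last => rw [Pmat_last_castSucc]
    | cast i =>
      rw [Pmat_castSucc_castSucc, if_pos (by omega)]
      exact mul_le_mul_of_nonneg_right
        (pow_le_pow_of_le_one (sub_nonneg.2 h1) (by linarith) (Nat.sub_le _ _)) h0
  · have hj1 : (j : ℕ) + 1 < L := by omega
    refine le_antisymm ((inf'_le _ (mem_univ (Fin.castSucc ⟨j + 1, hj1⟩))).trans_eq ?_)
      (le_inf' _ _ fun i _ => Pmat_nonneg h0 h1 i _)
    rw [Pmat_castSucc_castSucc, if_neg (by simp)]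

theorem minorizationConst_PmatM (h0 : 0 ≤ lam) (h1 : lam ≤ 1) :
    minorizationConst (PmatM L lam) = (1 - lam) ^ (L - 1) := by
  rw [minorizationConst, Fin.sum_univ_castSucc]
  simp only [PmatM, of_apply, inf'_Pmat_castSucc h0 h1, inf'_Pmat_last h0 h1]
  rw [Fin.sum_univ_eq_sum_range (fun n => if n = L - 1 then (1 - lam) ^ n * lam else 0),
    sum_ite_eq']
  cases L with
  | zero => simp
  | succ L =>
    rw [if_pos (mem_range.2 (by omega)), Nat.add_sub_cancel]
    ring

/-- **Doeblin-type convergence**: the minorization constant of `P_{λ,L}` equals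
`(1−λ)^{L−1}`, and the `k`-step distributions converge to `ρ` in total variation at
geometric rate `1 − (1−λ)^{L−1}`. -/
theorem doeblin_convergence (L : ℕ) (lam : ℝ) (h0 : 0 < lam) (h1 : lam < 1) :
    (∑ j : Fin (L+1), Finset.univ.inf' Finset.univ_nonempty (fun i => Pmat L lam i j)
        = (1 - lam)^(L-1)) ∧
    (∀ (k : ℕ) (w : Fin (L+1)),
      (1/2 : ℝ) * ∑ w' : Fin (L+1), |(PmatM L lam ^ k) w w' - rho L lam w'|
        ≤ (1 - (1 - lam)^(L-1))^k) := by
  have hβ : minorizationConst (PmatM L lam) = (1 - lam) ^ (L - 1) :=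
    minorizationConst_PmatM h0.le h1.le
  exact ⟨hβ, fun k w => hβ ▸ half_sum_abs_pow_sub_le sum_Pmat_row rho_vecMul_PmatM
    (rho_nonneg h0.le h1.le) (sum_rho h0.le h1) k w⟩

end MTD1D
end
end

section
/- Lemma A.1 (explicit stationary distribution): Let {ω_k}_{k≥0} be the Markov chain on {0,…,L} with ω_0 = 0 and transition matrix P_{λ,L}, and let g_k = (g_k^{(1)}, g_k^{(2)}) ∈ G = ℤ_{2L} × ℤ_{2L} be defined by g_k^{(1)} = ω_{k−1} if ω_{k−1} ∈ {0,…,L−1}, g_k^{(1)} = 0 if ω_{k−1} = L, and g_k^{(2)} = ω_k. Then {g_k}_{k≥1} is a Markov chain on G, and there exists C > 0 depending on λ and L such that for all 1 ≤ k ≤ m and g' ∈ G, Σ_{g∈G} |ℙ(g_m = g | g_k = g') − π(g)| ≤ C(1 − (1−λ)^{L−1})^{m−k}, where π is the distribution on G given for g = (x,y) by: π(x,y) = (1−λ)^L/(1+(L−1)λ) if (x,y) = (0,L); = λ(1−λ)^{L−x}/(1+(L−1)λ) if 1 ≤ x < L and y = L; = λ(1−λ)^y/(1+(L−1)λ) if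 x = 0 and 0 ≤ y < L; = λ²(1−λ)^{y−x}/(1+(L−1)λ) if 1 ≤ x ≤ y < L; and = 0 otherwise. -/
/-!
Lemma A.1 (explicit stationary distribution): with `{ω_k}` the Markov chain on `{0,…,L}`
with `ω_0 = 0` and transition matrix `P_{λ,L}`, and `g_k = (g_k^{(1)}, g_k^{(2)})` defined
by `g_k^{(1)} = ω_{k−1}` if `ω_{k−1} < L`, `g_k^{(1)} = 0` if `ω_{k−1} = L`, and
`g_k^{(2)} = ω_k`, the sequence `{g_k}_{k≥1}` is a Markov chain on `G = ℤ_{2L} × ℤ_{2L}`,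
and for some `C > 0` (depending on `λ` and `L`), for all `1 ≤ k ≤ m` and `g' ∈ G`,
`Σ_{g∈G} |ℙ(g_m = g | g_k = g') − π(g)| ≤ C (1 − (1−λ)^{L−1})^{m−k}`,
with `π` given by the explicit formula of the lemma.
-/

open MeasureTheory ProbabilityTheory Filter Finset
open scoped ENNReal ProbabilityTheory

noncomputable section

namespace MTD1D

/-- First component of the group element: `ω_{k−1}` if `ω_{k−1} < L`, else `0`. -/
def comp1 (L : ℕ) (w : Fin (L+1)) : ZMod (2*L) :=
  if w.val < L then (w.val : ZMod (2*L)) else 0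

/-- Second component of the group element: `ω_k`. -/
def comp2 (L : ℕ) (w : Fin (L+1)) : ZMod (2*L) := (w.val : ZMod (2*L))

/-- The group element `g_k` built from the auxiliary chain `W`, for `k ≥ 1`. -/
def gOfW {Ω : Type} (L : ℕ) (W : ℕ → Ω → Fin (L+1)) (k : ℕ) (ω : Ω) : G L :=
  (comp1 L (W (k-1) ω), comp2 L (W k ω))

/-- The explicit stationary distribution `π` on `G` of Lemma A.1, written for
`g = (x,y)` in terms of `x = g^{(1)}.val` and `y = g^{(2)}.val`. -/
def piExplicit (L : ℕ) (lam : ℝ) (g : G L) : ℝ :=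
  let x : ℕ := g.1.val
  let y : ℕ := g.2.val
  let D : ℝ := 1 + ((L:ℝ) - 1) * lam
  if x = 0 ∧ y = L then (1 - lam)^L / D
  else if 1 ≤ x ∧ x < L ∧ y = L then lam * (1 - lam)^(L - x) / D
  else if x = 0 ∧ y < L then lam * (1 - lam)^y / D
  else if 1 ≤ x ∧ x ≤ y ∧ y < L then lam^2 * (1 - lam)^(y - x) / D
  else 0

/-!
`g_k` is a function of `(ω_{k-1}, ω_k)` from which `ω_k` can be read off, so `{g_k}` inherits the
Markov property of `ω`, and given `g_k = g'` the law of `g_m` (`m > k`) is the image in `G` of the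
law of `(ω_{m-1}, ω_m)` for the chain started at `ω_k`. The matrix `P_{λ,L}` has the stationary law
`σ = (λ, …, λ, 1 - λ) / (1 + (L - 1) λ)`, the image in `G` of the pair law `σ(x) P(x, y)` is `π`,
and each row of `P` dominates `(1 - λ)^{L-1}` times the row of `L - 1`. By Doeblin's argument `P^n`
therefore converges to `σ` in `ℓ¹` at rate `1 - (1 - λ)^{L-1}`, and passing to pair laws and their
images does not increase `ℓ¹` distances. For `L = 1` the rate is `0`; then all rows of `P`
coincide and the conditional law of `g_m` is exactly `π`.
-/

open Matrix

section StochasticMatrix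

variable {S T : Type*} [Fintype S]

lemma sum_abs_sub_le_two {ρ σ : S → ℝ} (hρ : ∀ x, 0 ≤ ρ x) (hσ : ∀ x, 0 ≤ σ x)
    (hρ1 : ∑ x, ρ x = 1) (hσ1 : ∑ x, σ x = 1) : ∑ x, |ρ x - σ x| ≤ 2 := by
  calc ∑ x, |ρ x - σ x| ≤ ∑ x, (ρ x + σ x) := Finset.sum_le_sum fun x _ =>
        (abs_sub _ _).trans_eq (by rw [abs_of_nonneg (hρ x), abs_of_nonneg (hσ x)])
    _ = 2 := by rw [Finset.sum_add_distrib, hρ1, hσ1]; norm_num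

variable [DecidableEq T] {P : Matrix S S ℝ}

/-- The law of `f X₀ X₁` for a Markov chain with transition matrix `P` started from `ρ`. -/
def pairLaw (f : S → S → T) (ρ : S → ℝ) (P : Matrix S S ℝ) (a : T) : ℝ :=
  ∑ x, ∑ y, if f x y = a then ρ x * P x y else 0

variable {f : S → S → T}

lemma pairLaw_nonneg (hP : ∀ i j, 0 ≤ P i j) {ρ : S → ℝ} (hρ : ∀ x, 0 ≤ ρ x) (a : T) :
    0 ≤ pairLaw f ρ P a :=
  Finset.sum_nonneg fun x _ => Finset.sum_nonneg fun y _ => by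
    split_ifs
    exacts [mul_nonneg (hρ x) (hP x y), le_rfl]

lemma pairLaw_eq_of_forall_row_eq {x₀ : S} (hf : ∀ x y, f x y = f x₀ y) (hPx : ∀ x, P x = P x₀)
    {ρ σ : S → ℝ} (hρσ : ∑ x, ρ x = ∑ x, σ x) : pairLaw f ρ P = pairLaw f σ P := by
  have h : ∀ ρ : S → ℝ, pairLaw f ρ P
      = fun a => (∑ x, ρ x) * ∑ y, if f x₀ y = a then P x₀ y else 0 := fun ρ => by
    ext a
    simp only [pairLaw, hf _, hPx, Finset.sum_mul]
    exact Finset.sum_congr rfl fun x _ => by simp only [Finset.mul_sum, mul_ite, mul_zero]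
  rw [h, h, hρσ]

variable [DecidableEq S]

lemma sum_vecMul_of_mem_rowStochastic (hP : P ∈ rowStochastic ℝ S) (τ : S → ℝ) :
    ∑ j, (τ ᵥ* P) j = ∑ i, τ i := by
  rw [← dotProduct_one, ← dotProduct_one, ← dotProduct_mulVec, one_vecMul_of_mem_rowStochastic hP]

/-- Doeblin's contraction estimate. -/
lemma sum_abs_vecMul_le (hP : P ∈ rowStochastic ℝ S) {ν : S → ℝ} (hν : ∀ i j, ν j ≤ P i j)
    {τ : S → ℝ} (hτ : ∑ i, τ i = 0) :
    ∑ j, |(τ ᵥ* P) j| ≤ (1 - ∑ j, ν j) * ∑ i, |τ i| := by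
  have hτP : ∀ j, (τ ᵥ* P) j = ∑ i, τ i * (P i j - ν j) := fun j => by
    simp only [vecMul, dotProduct, mul_sub, Finset.sum_sub_distrib, ← Finset.sum_mul, hτ,
      zero_mul, sub_zero]
  calc ∑ j, |(τ ᵥ* P) j| ≤ ∑ j, ∑ i, |τ i| * (P i j - ν j) := Finset.sum_le_sum fun j _ => by
        rw [hτP]
        refine (Finset.abs_sum_le_sum_abs _ _).trans_eq (Finset.sum_congr rfl fun i _ => ?_)
        rw [abs_mul, abs_of_nonneg (sub_nonneg.2 (hν i j))]
    _ = (1 - ∑ j, ν j) * ∑ i, |τ i| := by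
        rw [Finset.sum_comm, Finset.mul_sum]
        refine Finset.sum_congr rfl fun i _ => ?_
        rw [← Finset.mul_sum, Finset.sum_sub_distrib, sum_row_of_mem_rowStochastic hP, mul_comm]

lemma sum_abs_vecMul_pow_sub_le (hP : P ∈ rowStochastic ℝ S) {ν : S → ℝ}
    (hν : ∀ i j, ν j ≤ P i j) {σ : S → ℝ} (hσ : σ ᵥ* P = σ) {ρ : S → ℝ}
    (hρσ : ∑ x, ρ x = ∑ x, σ x) (n : ℕ) :
    ∑ j, |(ρ ᵥ* P ^ n) j - σ j| ≤ (1 - ∑ j, ν j) ^ n * ∑ j, |ρ j - σ j| := by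
  have hε : 0 ≤ 1 - ∑ j, ν j := by
    rcases isEmpty_or_nonempty S with hS | ⟨⟨i⟩⟩
    · simp
    · rw [sub_nonneg, ← sum_row_of_mem_rowStochastic hP i]
      exact Finset.sum_le_sum fun j _ => hν i j
  induction n with
  | zero => simp
  | succ n ih =>
    have hstep : ρ ᵥ* P ^ (n + 1) - σ = (ρ ᵥ* P ^ n - σ) ᵥ* P := by
      rw [sub_vecMul, vecMul_vecMul, ← pow_succ, hσ]
    have hmass : ∑ j, (ρ ᵥ* P ^ n - σ) j = 0 := by
      simp only [Pi.sub_apply, Finset.sum_sub_distrib, hρσ,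
        sum_vecMul_of_mem_rowStochastic (pow_mem hP n), sub_self]
    calc ∑ j, |(ρ ᵥ* P ^ (n + 1)) j - σ j| = ∑ j, |((ρ ᵥ* P ^ n - σ) ᵥ* P) j| := by
          simp only [← hstep, Pi.sub_apply]
      _ ≤ (1 - ∑ j, ν j) * ∑ j, |(ρ ᵥ* P ^ n) j - σ j| := sum_abs_vecMul_le hP hν hmass
      _ ≤ (1 - ∑ j, ν j) ^ (n + 1) * ∑ j, |ρ j - σ j| := by
          rw [pow_succ, mul_comm _ (1 - _), mul_assoc]
          exact mul_le_mul_of_nonneg_left ih hε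

lemma sum_pairLaw [Fintype T] (hP : P ∈ rowStochastic ℝ S) (ρ : S → ℝ) :
    ∑ a, pairLaw f ρ P a = ∑ x, ρ x := by
  simp only [pairLaw]
  rw [Finset.sum_comm]
  refine Finset.sum_congr rfl fun x _ => ?_
  rw [Finset.sum_comm]
  simp [Finset.sum_ite_eq, ← Finset.mul_sum, sum_row_of_mem_rowStochastic hP]

lemma sum_abs_pairLaw_sub_le [Fintype T] (hP : P ∈ rowStochastic ℝ S) (ρ σ : S → ℝ) :
    ∑ a, |pairLaw f ρ P a - pairLaw f σ P a| ≤ ∑ x, |ρ x - σ x| := by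
  calc ∑ a, |pairLaw f ρ P a - pairLaw f σ P a|
      ≤ ∑ a, pairLaw f (fun x => |ρ x - σ x|) P a := Finset.sum_le_sum fun a _ => by
        simp only [pairLaw, ← Finset.sum_sub_distrib]
        refine (Finset.abs_sum_le_sum_abs _ _).trans (Finset.sum_le_sum fun x _ => ?_)
        refine (Finset.abs_sum_le_sum_abs _ _).trans_eq (Finset.sum_congr rfl fun y _ => ?_)
        split_ifs
        · rw [← sub_mul, abs_mul, abs_of_nonneg (hP.1 x y)]
        · simp
    _ = ∑ x, |ρ x - σ x| := sum_pairLaw hP _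

end StochasticMatrix

section MarkovChain

variable {Ω S T : Type*} {X : ℕ → Ω → S}

def trajectory (X : ℕ → Ω → S) (k : ℕ) (ω : Ω) : Fin (k+1) → S := fun i => X i ω

def IsDeterminedUpTo (X : ℕ → Ω → S) (k : ℕ) (A : Set Ω) : Prop :=
  ∀ ω ω', (∀ i ≤ k, X i ω = X i ω') → ω ∈ A → ω' ∈ A

namespace IsDeterminedUpTo

variable {k : ℕ} {A : Set Ω}

lemma mono (hA : IsDeterminedUpTo X k A) {k' : ℕ} (hk : k ≤ k') : IsDeterminedUpTo X k' A :=
  fun ω ω' h => hA ω ω' fun i hi => h i (hi.trans hk)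

lemma inter_state (hA : IsDeterminedUpTo X k A) (x : S) :
    IsDeterminedUpTo X k ({ω | X k ω = x} ∩ A) :=
  fun ω ω' h hω => ⟨(h k le_rfl).symm.trans hω.1, hA ω ω' h hω.2⟩

lemma preimage_image (hA : IsDeterminedUpTo X k A) :
    trajectory X k ⁻¹' (trajectory X k '' A) = A := by
  refine Set.Subset.antisymm ?_ (Set.subset_preimage_image _ _)
  rintro ω' ⟨ω, hω, hωω'⟩
  exact hA ω ω' (fun i hi => congrFun hωω' ⟨i, Nat.lt_succ_of_le hi⟩) hω

lemma measurableSet [MeasurableSpace Ω] [MeasurableSpace S] [MeasurableSingletonClass S]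
    [Finite S] (hA : IsDeterminedUpTo X k A) (hX : ∀ k, Measurable (X k)) :
    MeasurableSet A := by
  rw [← hA.preimage_image]
  exact measurable_pi_lambda (trajectory X k) (fun i => hX i)
    (Set.toFinite (trajectory X k '' A)).measurableSet

end IsDeterminedUpTo

lemma isDeterminedUpTo_slidingPair (f : S → S → T) (k : ℕ) (g : T) :
    IsDeterminedUpTo X k {ω | f (X (k-1) ω) (X k ω) = g} := fun ω ω' h hω => by
  rw [Set.mem_ofPred_eq, ← h k le_rfl, ← h (k-1) (Nat.sub_le k 1)]
  exact hω

lemma setOf_slidingPair_subset {f : S → S → T} {cur : T → S} (hcur : ∀ x y, cur (f x y) = y)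
    {k : ℕ} {g : T} : {ω | f (X (k-1) ω) (X k ω) = g} ⊆ {ω | X k ω = cur g} :=
  fun ω hω => by rw [Set.mem_ofPred_eq, ← hω.out, hcur]

variable [MeasurableSpace Ω] {μ : Measure Ω}

lemma measureReal_inter_preimage_finset [IsFiniteMeasure μ] [MeasurableSpace T]
    [MeasurableSingletonClass T] {f : Ω → T} (hf : Measurable f) (E : Set Ω) (s : Finset T) :
    μ.real (E ∩ f ⁻¹' s) = ∑ t ∈ s, μ.real (E ∩ f ⁻¹' {t}) := by
  have hfib : ∀ t, MeasurableSet (f ⁻¹' {t}) := fun t => hf (measurableSet_singleton t)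
  simp only [Set.inter_comm E, ← measureReal_restrict_apply (hf s.measurableSet),
    ← measureReal_restrict_apply (hfib _)]
  exact (sum_measureReal_preimage_singleton s fun t _ => hfib t).symm

lemma sum_measureReal_preimage_singleton_eq_one [IsProbabilityMeasure μ] [Fintype T] {Y : Ω → T}
    (hY : ∀ t, MeasurableSet (Y ⁻¹' {t})) : ∑ t, μ.real (Y ⁻¹' {t}) = 1 := by
  rw [sum_measureReal_preimage_singleton _ fun t _ => hY t, Finset.coe_univ, Set.preimage_univ,
    probReal_univ]

def HasTransitionMatrix (μ : Measure Ω) (X : ℕ → Ω → S) (P : Matrix S S ℝ) : Prop :=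
  ∀ (k : ℕ) (path : ℕ → S) (j : S),
    μ ({ω | X (k+1) ω = j} ∩ {ω | ∀ i ≤ k, X i ω = path i})
      = ENNReal.ofReal (P (path k) j) * μ {ω | ∀ i ≤ k, X i ω = path i}

namespace HasTransitionMatrix

variable {P : Matrix S S ℝ} (hX : HasTransitionMatrix μ X P) (hP : ∀ i j, 0 ≤ P i j)
include hX hP

lemma measureReal_inter_trajectory (k : ℕ) (p : Fin (k+1) → S) (j : S) :
    μ.real ({ω | X (k+1) ω = j} ∩ trajectory X k ⁻¹' {p})
      = P (p (Fin.last k)) j * μ.real (trajectory X k ⁻¹' {p}) := by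
  have hcyl : {ω | ∀ i ≤ k, X i ω = p ⟨min i k, by omega⟩} = trajectory X k ⁻¹' {p} := by
    ext ω
    simp only [Set.mem_ofPred_eq, Set.mem_preimage, Set.mem_singleton_iff, funext_iff,
      trajectory, Fin.forall_iff]
    refine ⟨fun h i hi => ?_, fun h i hi => ?_⟩ <;>
      simpa [Nat.min_eq_left (by omega : i ≤ k)] using h i (by omega)
  have h := hX k (fun i => p ⟨min i k, by omega⟩) j
  rw [hcyl, show (⟨min k k, _⟩ : Fin (k+1)) = Fin.last k from Fin.ext (min_self k)] at h
  simp only [measureReal_def, h, ENNReal.toReal_mul, ENNReal.toReal_ofReal (hP _ _)]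

variable [MeasurableSpace S] [MeasurableSingletonClass S] [Fintype S] [IsFiniteMeasure μ]
  (hXm : ∀ k, Measurable (X k))
include hXm

lemma measureReal_succ_inter {k : ℕ} {A : Set Ω} (hA : IsDeterminedUpTo X k A) {i : S}
    (hAi : A ⊆ {ω | X k ω = i}) (j : S) :
    μ.real ({ω | X (k+1) ω = j} ∩ A) = P i j * μ.real A := by
  classical
  have hτ : Measurable (trajectory X k) := measurable_pi_lambda _ fun i => hXm i
  have hAs : A = trajectory X k ⁻¹' ↑(Finset.univ.filter (· ∈ trajectory X k '' A)) := by
    rw [Finset.coe_filter_univ, Set.ofPred_mem_eq, hA.preimage_image]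
  rw [hAs, measureReal_inter_preimage_finset hτ, ← Set.univ_inter (trajectory X k ⁻¹' _),
    measureReal_inter_preimage_finset hτ, Finset.mul_sum]
  refine Finset.sum_congr rfl fun p hp => ?_
  obtain ⟨ω, hω, rfl⟩ := (Finset.mem_filter.1 hp).2
  rw [Set.univ_inter, hX.measureReal_inter_trajectory hP]
  exact congrArg (P · j * _) (hAi hω)

lemma measureReal_pair_inter [DecidableEq T] (f : S → S → T) (a : T) {k : ℕ} {A : Set Ω}
    (hA : IsDeterminedUpTo X k A) :
    μ.real ({ω | f (X k ω) (X (k+1) ω) = a} ∩ A)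
      = ∑ x, ∑ y, if f x y = a then P x y * μ.real ({ω | X k ω = x} ∩ A) else 0 := by
  have hpair : Measurable fun ω => (X k ω, X (k+1) ω) := (hXm k).prodMk (hXm (k+1))
  rw [← Set.inter_univ (_ ∩ A), ← Set.preimage_univ (f := fun ω => (X k ω, X (k+1) ω)),
    ← Finset.coe_univ, measureReal_inter_preimage_finset hpair, Fintype.sum_prod_type]
  refine Finset.sum_congr rfl fun x _ => Finset.sum_congr rfl fun y _ => ?_
  split_ifs with h
  · rw [← hX.measureReal_succ_inter hP hXm (hA.inter_state x) Set.inter_subset_left]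
    congr 1
    ext ω
    simp only [Set.mem_inter_iff, Set.mem_ofPred_eq, Set.mem_preimage, Set.mem_singleton_iff,
      Prod.mk.injEq]
    constructor
    · rintro ⟨⟨-, hωA⟩, hx, hy⟩
      exact ⟨hy, hx, hωA⟩
    · rintro ⟨hy, hx, hωA⟩
      exact ⟨⟨by rw [hx, hy, h], hωA⟩, hx, hy⟩
  · convert measureReal_empty (μ := μ)
    ext ω
    simp only [Set.mem_inter_iff, Set.mem_ofPred_eq, Set.mem_preimage, Set.mem_singleton_iff,
      Prod.mk.injEq, Set.mem_empty_iff_false, iff_false]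
    rintro ⟨⟨hf, -⟩, hx, hy⟩
    exact h (by rw [← hx, ← hy, hf])

lemma measureReal_succ_inter_eq_sum {k : ℕ} {A : Set Ω} (hA : IsDeterminedUpTo X k A) (j : S) :
    μ.real ({ω | X (k+1) ω = j} ∩ A) = ∑ x, P x j * μ.real ({ω | X k ω = x} ∩ A) := by
  classical
  simpa using hX.measureReal_pair_inter hP hXm (fun _ y => y) j hA

variable [DecidableEq S] {k : ℕ} {A : Set Ω} (hA : IsDeterminedUpTo X k A) {v : S}
  (hAv : A ⊆ {ω | X k ω = v})
include hA hAv

lemma measureReal_add_inter (n : ℕ) (j : S) :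
    μ.real ({ω | X (k+n) ω = j} ∩ A) = (P ^ n) v j * μ.real A := by
  induction n generalizing j with
  | zero =>
    rw [add_zero, pow_zero, one_apply]
    split_ifs with h
    · rw [← h, Set.inter_eq_right.2 hAv, one_mul]
    · rw [zero_mul]
      convert measureReal_empty (μ := μ)
      exact Set.eq_empty_of_forall_notMem fun ω hω => h ((hAv hω.2).symm.trans hω.1)
  | succ n ih =>
    rw [← add_assoc, hX.measureReal_succ_inter_eq_sum hP hXm (hA.mono (Nat.le_add_right k n)),
      pow_succ, mul_apply, Finset.sum_mul]
    exact Finset.sum_congr rfl fun x _ => by rw [ih]; ring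

lemma measureReal_pair_add_inter [DecidableEq T] (f : S → S → T) (a : T) (n : ℕ) :
    μ.real ({ω | f (X (k+n) ω) (X (k+n+1) ω) = a} ∩ A) = pairLaw f ((P ^ n) v) P a * μ.real A := by
  rw [hX.measureReal_pair_inter hP hXm f a (hA.mono (Nat.le_add_right k n)), pairLaw,
    Finset.sum_mul]
  refine Finset.sum_congr rfl fun x _ => ?_
  rw [Finset.sum_mul]
  refine Finset.sum_congr rfl fun y _ => ?_
  split_ifs
  · rw [hX.measureReal_add_inter hP hXm hA hAv]; ring
  · rw [zero_mul]

end HasTransitionMatrix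

section SlidingPair

variable [DecidableEq T] {f : S → S → T} {cur : T → S} (hcur : ∀ x y, cur (f x y) = y)
  [MeasurableSpace S] [MeasurableSingletonClass S] [Fintype S] [DecidableEq S]
  [IsFiniteMeasure μ] {P : Matrix S S ℝ} (hX : HasTransitionMatrix μ X P)
  (hP : ∀ i j, 0 ≤ P i j) (hXm : ∀ k, Measurable (X k))
include hcur hX hP hXm

theorem HasTransitionMatrix.slidingPair_markov {k : ℕ} (hk : 1 ≤ k) (path : ℕ → T) (a : T) :
    μ ({ω | f (X k ω) (X (k+1) ω) = a}
        ∩ {ω | ∀ j, 1 ≤ j → j ≤ k → f (X (j-1) ω) (X j ω) = path j})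
      = ENNReal.ofReal (pairLaw f ((1 : Matrix S S ℝ) (cur (path k))) P a)
        * μ {ω | ∀ j, 1 ≤ j → j ≤ k → f (X (j-1) ω) (X j ω) = path j} := by
  set E := {ω | ∀ j, 1 ≤ j → j ≤ k → f (X (j-1) ω) (X j ω) = path j}
  have hE : IsDeterminedUpTo X k E := fun ω ω' h hω j hj hjk => by
    rw [← h j hjk, ← h (j-1) (by omega)]
    exact hω j hj hjk
  have hEcur : E ⊆ {ω | X k ω = cur (path k)} :=
    fun ω hω => setOf_slidingPair_subset hcur (hω k hk le_rfl)
  have h := hX.measureReal_pair_add_inter hP hXm hE hEcur f a 0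
  rw [add_zero, pow_zero] at h
  rw [← ofReal_measureReal, ← ofReal_measureReal, h,
    ENNReal.ofReal_mul (pairLaw_nonneg hP (fun x => by rw [one_apply]; split_ifs <;> norm_num) a)]

lemma HasTransitionMatrix.toReal_cond_slidingPair {k : ℕ} {g : T}
    (hg : μ {ω | f (X (k-1) ω) (X k ω) = g} ≠ 0) (n : ℕ) (a : T) :
    (μ[|{ω | f (X (k-1) ω) (X k ω) = g}] {ω | f (X (k+n) ω) (X (k+n+1) ω) = a}).toReal
      = pairLaw f ((P ^ n) (cur g)) P a := by
  set B := {ω | f (X (k-1) ω) (X k ω) = g}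
  have hB : IsDeterminedUpTo X k B := isDeterminedUpTo_slidingPair f k g
  rw [cond_apply (hB.measurableSet hXm), ENNReal.toReal_mul, Set.inter_comm, ← measureReal_def,
    hX.measureReal_pair_add_inter hP hXm hB (setOf_slidingPair_subset hcur) f a n,
    ENNReal.toReal_inv, ← measureReal_def]
  have : μ.real B ≠ 0 := (measureReal_ne_zero_iff (measure_ne_top μ B)).2 hg
  field_simp

end SlidingPair

end MarkovChain

section Chain

lemma sum_range_ite_pow_mul (lam : ℝ) (t N : ℕ) :
    ∑ n ∈ Finset.range N, (if t ≤ n then (1 - lam) ^ (n - t) * lam else 0)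
      = 1 - (1 - lam) ^ (N - t) := by
  induction N with
  | zero => simp
  | succ N ih =>
    rw [Finset.sum_range_succ, ih]
    split_ifs with h
    · rw [show N + 1 - t = N - t + 1 by omega, pow_succ]; ring
    · rw [show N + 1 - t = 0 by omega, show N - t = 0 by omega]; simp

lemma mul_sum_range_ite_pow (lam : ℝ) (M N : ℕ) :
    lam * ∑ t ∈ Finset.range N, (if t ≤ M then (1 - lam) ^ (M - t) else 0)
      = (1 - lam) ^ (M + 1 - N) - (1 - lam) ^ (M + 1) := by
  induction N with
  | zero => simp
  | succ N ih =>
    rw [Finset.sum_range_succ, mul_add, ih]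
    split_ifs with h
    · rw [show M + 1 - N = M - N + 1 by omega, show M + 1 - (N + 1) = M - N by omega, pow_succ]
      ring
    · rw [show M + 1 - N = 0 by omega, show M + 1 - (N + 1) = 0 by omega]; simp

variable {L : ℕ} {lam : ℝ}

/-- The row of `P_{λ,L}` at `x`, and the first coordinate of a group element built from `x`,
only depend on `cls L x`: the state `L` behaves as `0`. -/
def cls (L : ℕ) (x : Fin (L+1)) : ℕ := if x.val = L then 0 else x.val

def geomRow (L : ℕ) (lam : ℝ) (t y : ℕ) : ℝ :=
  if y = L then (1 - lam) ^ (L - t) else if t ≤ y then (1 - lam) ^ (y - t) * lam else 0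

lemma Pmat_eq_geomRow (i j : Fin (L+1)) : Pmat L lam i j = geomRow L lam (cls L i) j := rfl

/-- `Pmat` has a plain function type, on which `^` would be the pointwise power. -/
abbrev transMatrix (L : ℕ) (lam : ℝ) : Matrix (Fin (L+1)) (Fin (L+1)) ℝ := Pmat L lam

lemma cls_lt (hL : 0 < L) (x : Fin (L+1)) : cls L x < L := by
  unfold cls; split_ifs <;> omega

lemma geomRow_nonneg (h0 : 0 ≤ lam) (h1 : lam ≤ 1) (t y : ℕ) : 0 ≤ geomRow L lam t y := by
  unfold geomRow
  have : 0 ≤ 1 - lam := by linarith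
  split_ifs <;> positivity

lemma sum_geomRow (t : ℕ) : ∑ y ∈ Finset.range (L+1), geomRow L lam t y = 1 := by
  have h : ∑ y ∈ Finset.range L, geomRow L lam t y = 1 - (1 - lam) ^ (L - t) := by
    rw [← sum_range_ite_pow_mul]
    exact Finset.sum_congr rfl fun y hy => by rw [geomRow, if_neg (Finset.mem_range.1 hy).ne]
  rw [Finset.sum_range_succ, h, geomRow, if_pos rfl, sub_add_cancel]

lemma transMatrix_mem_rowStochastic (h0 : 0 ≤ lam) (h1 : lam ≤ 1) :
    transMatrix L lam ∈ rowStochastic ℝ (Fin (L+1)) := by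
  refine mem_rowStochastic_iff_sum.2 ⟨fun i j => geomRow_nonneg h0 h1 _ _, fun i => ?_⟩
  rw [← sum_geomRow (L := L) (lam := lam) (cls L i), ← Fin.sum_univ_eq_sum_range]
  rfl

lemma geomRow_minorization (h0 : 0 ≤ lam) (h1 : lam ≤ 1) {t y : ℕ} (ht : t < L) (hy : y ≤ L) :
    (1 - lam) ^ (L - 1) * geomRow L lam (L - 1) y ≤ geomRow L lam t y := by
  have ha : 0 ≤ 1 - lam := by linarith
  have hb : 1 - lam ≤ 1 := by linarith
  unfold geomRow
  split_ifs
  · rw [← pow_add]; exact pow_le_pow_of_le_one ha hb (by omega)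
  · rw [show y - (L - 1) = 0 by omega, pow_zero, one_mul]
    exact mul_le_mul_of_nonneg_right (pow_le_pow_of_le_one ha hb (by omega)) h0
  · omega
  · rw [mul_zero]; positivity
  · rw [mul_zero]

lemma Pmat_minorization (hL : 0 < L) (h0 : 0 ≤ lam) (h1 : lam ≤ 1) (i j : Fin (L+1)) :
    (1 - lam) ^ (L - 1) * Pmat L lam ⟨L - 1, by omega⟩ j ≤ Pmat L lam i j := by
  have hcls : cls L ⟨L - 1, by omega⟩ = L - 1 := if_neg (by simp; omega)
  rw [Pmat_eq_geomRow, Pmat_eq_geomRow, hcls]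
  exact geomRow_minorization h0 h1 (cls_lt hL i) (Nat.lt_succ_iff.1 j.isLt)

def stationaryDist (L : ℕ) (lam : ℝ) (x : Fin (L+1)) : ℝ :=
  (if x.val = L then 1 - lam else lam) / (1 + ((L:ℝ) - 1) * lam)

lemma stationaryDist_vecMul (hL : 0 < L) (h0 : 0 ≤ lam) :
    stationaryDist L lam ᵥ* transMatrix L lam = stationaryDist L lam := by
  have hD : 0 < 1 + ((L:ℝ) - 1) * lam := by
    have : (1:ℝ) ≤ L := by exact_mod_cast hL
    nlinarith
  set D := 1 + ((L:ℝ) - 1) * lam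
  funext ⟨y, hy⟩
  simp only [vecMul, dotProduct]
  rw [Fin.sum_univ_castSucc]
  simp only [stationaryDist, Pmat_eq_geomRow, cls, Fin.val_castSucc, Fin.val_last, if_true,
    Fin.is_lt, ne_of_lt, if_false]
  rw [Fin.sum_univ_eq_sum_range (fun i => lam / D * geomRow L lam i y) L, ← Finset.mul_sum,
    div_mul_eq_mul_div, div_mul_eq_mul_div, ← add_div, mul_comm, mul_comm (1 - lam)]
  congr 1
  by_cases hyL : y = L
  · subst hyL
    have hcol := mul_sum_range_ite_pow lam y y
    rw [Finset.sum_congr rfl fun i hi => if_pos (Finset.mem_range.1 hi).le,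
      Nat.add_sub_cancel_left, pow_one] at hcol
    simp only [geomRow, if_true, Nat.sub_zero]
    linear_combination hcol
  · have hcol := mul_sum_range_ite_pow lam y L
    have hrow : ∀ i, geomRow L lam i y = (if i ≤ y then (1 - lam) ^ (y - i) else 0) * lam :=
      fun i => by rw [geomRow, if_neg hyL, ite_mul, zero_mul]
    simp only [hrow, ← Finset.sum_mul, Nat.zero_le, if_true, Nat.sub_zero, if_neg hyL,
      show y + 1 - L = 0 by omega, pow_zero] at hcol ⊢
    linear_combination lam * hcol


lemma stationaryDist_nonneg (h0 : 0 ≤ lam) (h1 : lam ≤ 1) (x : Fin (L+1)) :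
    0 ≤ stationaryDist L lam x := by
  have : 0 ≤ 1 + ((L:ℝ) - 1) * lam := by
    rcases Nat.eq_zero_or_pos L with rfl | hL
    · simp; linarith
    · have : (1:ℝ) ≤ L := by exact_mod_cast hL
      nlinarith
  unfold stationaryDist
  split_ifs <;> apply div_nonneg <;> linarith

lemma sum_stationaryDist (hL : 0 < L) (h0 : 0 ≤ lam) : ∑ x, stationaryDist L lam x = 1 := by
  have hD : 0 < 1 + ((L:ℝ) - 1) * lam := by
    have : (1:ℝ) ≤ L := by exact_mod_cast hL
    nlinarith
  rw [Fin.sum_univ_castSucc]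
  simp only [stationaryDist, Fin.val_castSucc, Fin.val_last, Fin.is_lt, ne_of_lt, if_false,
    if_true, Finset.sum_const, Finset.card_univ, Fintype.card_fin, nsmul_eq_mul]
  rw [mul_div_assoc', ← add_div, div_eq_one_iff_eq hD.ne']
  ring

def pairToG (L : ℕ) (x y : Fin (L+1)) : G L := (comp1 L x, comp2 L y)

def currentState (L : ℕ) (g : G L) : Fin (L+1) := Fin.ofNat (L+1) g.2.val

lemma currentState_pairToG (hL : 0 < L) (x y : Fin (L+1)) : currentState L (pairToG L x y) = y := by
  ext
  simp only [currentState, pairToG, comp2, ZMod.val_cast_of_lt (by omega : y.val < 2 * L),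
    Fin.val_ofNat, Nat.mod_eq_of_lt y.isLt]

lemma natCast_eq_iff_eq_val [NeZero (2*L)] {m : ℕ} (hm : m < 2 * L) (b : ZMod (2*L)) :
    (m : ZMod (2*L)) = b ↔ m = b.val := by
  constructor
  · rintro rfl; rw [ZMod.val_cast_of_lt hm]
  · rintro rfl; exact ZMod.natCast_zmod_val b

lemma comp1_eq_cls (x : Fin (L+1)) : comp1 L x = (cls L x : ZMod (2*L)) := by
  unfold comp1 cls
  split_ifs <;> first | omega | simp

lemma piExplicit_eq_pairLaw [NeZero (2*L)] (hL : 0 < L) (a : G L) :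
    piExplicit L lam a = pairLaw (pairToG L) (stationaryDist L lam) (transMatrix L lam) a := by
  set u := a.1.val with hu
  set v := a.2.val with hv
  have hcomp1 : ∀ x, comp1 L x = a.1 ↔ cls L x = u := fun x => by
    rw [comp1_eq_cls, natCast_eq_iff_eq_val (by have := cls_lt hL x; omega)]
  have hcomp2 : ∀ y : Fin (L+1), comp2 L y = a.2 ↔ y.val = v := fun y =>
    natCast_eq_iff_eq_val (by omega) _
  have hinner : ∀ x, ∑ y, (if pairToG L x y = a
      then stationaryDist L lam x * Pmat L lam x y else 0)
      = if cls L x = u then (if v < L + 1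
        then stationaryDist L lam x * geomRow L lam (cls L x) v else 0) else 0 := fun x => by
    simp only [pairToG, Prod.ext_iff, hcomp1, hcomp2, Pmat_eq_geomRow, ite_and]
    by_cases hx : cls L x = u
    · simp only [hx, if_true]
      rw [Fin.sum_univ_eq_sum_range (fun n => if n = v then
        stationaryDist L lam x * geomRow L lam u n else 0), Finset.sum_ite_eq']
      simp only [Finset.mem_range]
    · simp [hx]
  unfold pairLaw
  rw [Finset.sum_congr rfl fun x _ => hinner x, Fin.sum_univ_castSucc]
  simp only [cls, stationaryDist, Fin.val_castSucc, Fin.val_last, Fin.is_lt, ne_of_lt, if_false,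
    if_true]
  rw [Fin.sum_univ_eq_sum_range (fun n => if n = u then (if v < L + 1
    then lam / (1 + ((L:ℝ) - 1) * lam) * geomRow L lam n v else 0) else 0), Finset.sum_ite_eq']
  simp only [Finset.mem_range]
  simp only [piExplicit, geomRow, ← hu, ← hv]
  split_ifs
  all_goals first
    | omega
    | ring1
    | (rw [show u = 0 by omega, Nat.sub_zero]; ring1)

lemma piExplicit_nonneg [NeZero (2*L)] (hL : 0 < L) (h0 : 0 ≤ lam) (h1 : lam ≤ 1) (a : G L) :
    0 ≤ piExplicit L lam a := by
  rw [piExplicit_eq_pairLaw hL]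
  exact pairLaw_nonneg (transMatrix_mem_rowStochastic h0 h1).1 (stationaryDist_nonneg h0 h1) a

lemma sum_piExplicit [NeZero (2*L)] (hL : 0 < L) (h0 : 0 ≤ lam) (h1 : lam ≤ 1) :
    ∑ a, piExplicit L lam a = 1 := by
  simp only [piExplicit_eq_pairLaw hL]
  rw [sum_pairLaw (transMatrix_mem_rowStochastic h0 h1), sum_stationaryDist hL h0]

lemma pairLaw_pow_eq_piExplicit_of_L_eq_one [NeZero (2*L)] (hL : L = 1) (h0 : 0 ≤ lam)
    (h1 : lam ≤ 1) (v : Fin (L+1)) (n : ℕ) :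
    pairLaw (pairToG L) ((transMatrix L lam ^ n) v) (transMatrix L lam) = piExplicit L lam := by
  have hP := transMatrix_mem_rowStochastic (L := L) h0 h1
  have hcls : ∀ x, cls L x = 0 := fun x => by have := cls_lt (by omega) x; omega
  funext a
  rw [piExplicit_eq_pairLaw (by omega)]
  refine congrFun (pairLaw_eq_of_forall_row_eq (x₀ := 0) (fun x y => ?_) (fun x => ?_) ?_) a
  · simp only [pairToG, comp1_eq_cls, hcls]
  · funext j; simp only [Pmat_eq_geomRow, hcls]
  · rw [sum_row_of_mem_rowStochastic (pow_mem hP n), sum_stationaryDist (by omega) h0]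

lemma sum_abs_pow_sub_stationaryDist_le (hL : 0 < L) (h0 : 0 ≤ lam) (h1 : lam ≤ 1)
    (v : Fin (L+1)) (n : ℕ) :
    ∑ x, |(transMatrix L lam ^ n) v x - stationaryDist L lam x|
      ≤ 2 * (1 - (1 - lam) ^ (L - 1)) ^ n := by
  have hP := transMatrix_mem_rowStochastic (L := L) h0 h1
  have hr0 : 0 ≤ 1 - (1 - lam) ^ (L - 1) := sub_nonneg.2 (pow_le_one₀ (by linarith) (by linarith))
  have hν : ∑ j, (1 - lam) ^ (L - 1) * transMatrix L lam ⟨L - 1, by omega⟩ j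
      = (1 - lam) ^ (L - 1) := by
    rw [← Finset.mul_sum, sum_row_of_mem_rowStochastic hP, mul_one]
  have hδ : ∑ x, (Pi.single v 1 : Fin (L+1) → ℝ) x = 1 := by
    rw [Finset.sum_pi_single', if_pos (Finset.mem_univ v)]
  have hcontr := sum_abs_vecMul_pow_sub_le hP (Pmat_minorization hL h0 h1)
    (stationaryDist_vecMul hL h0) (hδ.trans (sum_stationaryDist hL h0).symm) n
  rw [single_one_vecMul, hν] at hcontr
  refine hcontr.trans ?_
  rw [mul_comm 2]
  refine mul_le_mul_of_nonneg_left (sum_abs_sub_le_two (fun x => ?_)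
    (stationaryDist_nonneg h0 h1) hδ (sum_stationaryDist hL h0)) (pow_nonneg hr0 n)
  rw [Pi.single_apply]
  split_ifs <;> norm_num

theorem sum_abs_pairLaw_pow_sub_piExplicit_le [NeZero (2*L)] (hL : 0 < L) (h0 : 0 < lam)
    (h1 : lam ≤ 1) (v : Fin (L+1)) (n : ℕ) :
    ∑ a, |pairLaw (pairToG L) ((transMatrix L lam ^ n) v) (transMatrix L lam) a
        - piExplicit L lam a|
      ≤ max 2 (2 / (1 - (1 - lam) ^ (L - 1))) * (1 - (1 - lam) ^ (L - 1)) ^ (n + 1) := by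
  set r := 1 - (1 - lam) ^ (L - 1)
  rcases (Nat.succ_le_of_lt hL).eq_or_lt with hL1 | hL2
  · -- here `r = 0`, so the conditional law has to be exactly `π`
    subst hL1
    simp [r, pairLaw_pow_eq_piExplicit_of_L_eq_one rfl h0.le h1]
  have hr : 0 < r := by
    have : (1 - lam) ^ (L - 1) ≤ 1 - lam := pow_le_of_le_one (by linarith) (by linarith) (by omega)
    linarith
  simp only [piExplicit_eq_pairLaw hL]
  calc _ ≤ ∑ x, |(transMatrix L lam ^ n) v x - stationaryDist L lam x| :=
        sum_abs_pairLaw_sub_le (transMatrix_mem_rowStochastic h0.le h1) _ _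
    _ ≤ 2 * r ^ n := sum_abs_pow_sub_stationaryDist_le hL h0.le h1 v n
    _ = 2 / r * r ^ (n + 1) := by field_simp; ring
    _ ≤ max 2 (2 / r) * r ^ (n + 1) := by gcongr; exact le_max_right _ _

end Chain

theorem explicit_stationary_distribution_general
    (L : ℕ) (hL : 0 < L) [NeZero (2*L)]
    (lam : ℝ) (hlam : lam ∈ Set.Ioo (0:ℝ) 1)
    {Ω : Type} [MeasureSpace Ω] [IsProbabilityMeasure (ℙ : Measure Ω)]
    (W : ℕ → Ω → Fin (L+1)) (hWMeas : ∀ k, Measurable (W k))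
    (hWMarkov : ∀ (k : ℕ) (path : ℕ → Fin (L+1)) (j : Fin (L+1)),
      ℙ ({ω | W (k+1) ω = j} ∩ {ω | ∀ i ≤ k, W i ω = path i})
        = ENNReal.ofReal (Pmat L lam (path k) j) * ℙ {ω | ∀ i ≤ k, W i ω = path i}) :
    -- (a) {g_k}_{k≥1} is a time-homogeneous Markov chain on G
    (∃ κ : G L → G L → ℝ≥0∞,
      ∀ (k : ℕ), 1 ≤ k → ∀ (path : ℕ → G L) (a : G L),
        ℙ ({ω | gOfW L W (k+1) ω = a} ∩ {ω | ∀ j, 1 ≤ j → j ≤ k → gOfW L W j ω = path j})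
          = κ (path k) a * ℙ {ω | ∀ j, 1 ≤ j → j ≤ k → gOfW L W j ω = path j}) ∧
    -- (b) exponential convergence towards the explicit distribution π
    (∃ C : ℝ, 0 < C ∧
      ∀ k m : ℕ, 1 ≤ k → k ≤ m → ∀ g' : G L,
        ℙ {ω | gOfW L W k ω = g'} ≠ 0 →
        ∑ a : G L,
          |((ℙ : Measure Ω)[|{ω | gOfW L W k ω = g'}] {ω | gOfW L W m ω = a}).toReal
            - piExplicit L lam a|
          ≤ C * (1 - (1 - lam)^(L-1))^(m-k)) := by
  obtain ⟨h0, h1⟩ := hlam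
  have hP := transMatrix_mem_rowStochastic (L := L) h0.le h1.le
  have hX : HasTransitionMatrix ℙ W (transMatrix L lam) := hWMarkov
  have hcur := currentState_pairToG hL
  refine ⟨⟨fun g a => ENNReal.ofReal
      (pairLaw (pairToG L) ((1 : Matrix (Fin (L+1)) (Fin (L+1)) ℝ) (currentState L g))
        (transMatrix L lam) a),
    fun k hk path a => HasTransitionMatrix.slidingPair_markov hcur hX hP.1 hWMeas hk path a⟩,
    max 2 (2 / (1 - (1 - lam) ^ (L - 1))), lt_max_of_lt_left two_pos, fun k m hk hkm g' hg' => ?_⟩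
  obtain ⟨d, rfl⟩ := Nat.exists_eq_add_of_le hkm
  cases d with
  | zero =>
    have hY : ∀ a, MeasurableSet {ω | gOfW L W k ω = a} :=
      fun a => (isDeterminedUpTo_slidingPair (pairToG L) k a).measurableSet hWMeas
    have := cond_isProbabilityMeasure (μ := (ℙ : Measure Ω)) hg'
    rw [Nat.add_zero, Nat.sub_self, pow_zero, mul_one]
    exact (sum_abs_sub_le_two (fun a => ENNReal.toReal_nonneg)
      (piExplicit_nonneg hL h0.le h1.le) (sum_measureReal_preimage_singleton_eq_one hY)
      (sum_piExplicit hL h0.le h1.le)).trans (le_max_left _ _)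
  | succ n =>
    have hlaw : ∀ a, ((ℙ : Measure Ω)[|{ω | gOfW L W k ω = g'}]
        {ω | gOfW L W (k + (n + 1)) ω = a}).toReal
          = pairLaw (pairToG L) ((transMatrix L lam ^ n) (currentState L g'))
              (transMatrix L lam) a :=
      HasTransitionMatrix.toReal_cond_slidingPair hcur hX hP.1 hWMeas hg' n
    simp only [hlaw, Nat.add_sub_cancel_left]
    exact sum_abs_pairLaw_pow_sub_piExplicit_le hL h0 h1.le _ n

/-- **Lemma A.1**: `{g_k}_{k≥1}` is a Markov chain on `G`, and its conditional laws
converge in total variation to the explicit distribution `piExplicit` at rate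
`1 − (1−λ)^{L−1}`. -/
theorem explicit_stationary_distribution
    (L : ℕ) (hL : 0 < L) [NeZero (2*L)]
    (lam : ℝ) (hlam : lam ∈ Set.Ioo (0:ℝ) 1)
    {Ω : Type} [MeasureSpace Ω] [IsProbabilityMeasure (ℙ : Measure Ω)]
    (W : ℕ → Ω → Fin (L+1)) (hWMeas : ∀ k, Measurable (W k))
    (hW0 : ∀ ω, W 0 ω = ⟨0, Nat.succ_pos L⟩)
    (hWMarkov : ∀ (k : ℕ) (path : ℕ → Fin (L+1)) (j : Fin (L+1)),
      ℙ ({ω | W (k+1) ω = j} ∩ {ω | ∀ i ≤ k, W i ω = path i})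
        = ENNReal.ofReal (Pmat L lam (path k) j) * ℙ {ω | ∀ i ≤ k, W i ω = path i}) :
    -- (a) {g_k}_{k≥1} is a time-homogeneous Markov chain on G
    (∃ κ : G L → G L → ℝ≥0∞,
      ∀ (k : ℕ), 1 ≤ k → ∀ (path : ℕ → G L) (a : G L),
        ℙ ({ω | gOfW L W (k+1) ω = a} ∩ {ω | ∀ j, 1 ≤ j → j ≤ k → gOfW L W j ω = path j})
          = κ (path k) a * ℙ {ω | ∀ j, 1 ≤ j → j ≤ k → gOfW L W j ω = path j}) ∧
    -- (b) exponential convergence towards the explicit distribution π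
    (∃ C : ℝ, 0 < C ∧
      ∀ k m : ℕ, 1 ≤ k → k ≤ m → ∀ g' : G L,
        ℙ {ω | gOfW L W k ω = g'} ≠ 0 →
        ∑ a : G L,
          |((ℙ : Measure Ω)[|{ω | gOfW L W k ω = g'}] {ω | gOfW L W m ω = a}).toReal
            - piExplicit L lam a|
          ≤ C * (1 - (1 - lam)^(L-1))^(m-k)) :=
  explicit_stationary_distribution_general L hL lam hlam W hWMeas hWMarkov

end MTD1D
end
end

section
/- Lemma A.2 (strong spatial mixing of the hard-core model, stated as used in the paper): For a hard-core model Θ on a graph (V, E) with maximal degree Δ, there exists a critical value λ_c > 0 depending on Δ such that for any activity 0 < λ < λ_c there exist constants c, γ > 0, depending on λ and Δ, such that for any vertex v ∈ V, any set of vertices S₁ ⊂ V, any τ ∈ {0,1}, and any configurations η, η' ∈ {0,1}^{S₁}, |ℙ(Θ_v = τ | Θ_{S₁} = η) − ℙ(Θ_v = τ | Θ_{S₁} = η')| ≤ c·exp(−γ·d̃(v, η, η')), where d̃(v, η, η') = min{ d(v,w) : η_w ≠ η'_w } is the smallest graph distance from v to a vertex of S₁ on which η and η' differ. -/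
/-!
Lemma A.2 (strong spatial mixing of the hard-core model, as used in the paper, after
Corollary 2.6 of Weitz 2006): for a hard-core model `Θ` on a graph `(V,E)` with maximal
degree `Δ` there is a critical activity `λ_c > 0` depending on `Δ` such that for any
`0 < λ < λ_c` there are constants `c, γ > 0` depending on `λ` and `Δ` with
`|ℙ(Θ_v = τ | Θ_{S₁} = η) − ℙ(Θ_v = τ | Θ_{S₁} = η')| ≤ c exp(−γ d̃(v,η,η'))`,
where `d̃(v,η,η') = min{ d(v,w) : w ∈ S₁, η_w ≠ η'_w }` is the smallest graph distance
from `v` to a vertex of `S₁` on which `η` and `η'` differ.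
-/

open MeasureTheory ProbabilityTheory Filter Finset
open scoped ENNReal ProbabilityTheory

noncomputable section

namespace HardCore

/-- A configuration is admissible (independent) if no edge has both endpoints
occupied. -/
def Admissible {V : Type} (Gr : SimpleGraph V) (η : V → Bool) : Prop :=
  ∀ v w : V, Gr.Adj v w → ¬(η v = true ∧ η w = true)

instance {V : Type} [Fintype V] (Gr : SimpleGraph V) [DecidableRel Gr.Adj]
    (η : V → Bool) : Decidable (Admissible Gr η) := by
  unfold Admissible; infer_instance

/-- The number of occupied sites of a configuration. -/
def numOcc {V : Type} [Fintype V] [DecidableEq V] (η : V → Bool) : ℕ :=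
  (Finset.univ.filter (fun v => η v = true)).card

/-- The hard-core partition function `Z_λ = Σ_{η admissible} λ^{|η|}`. -/
def partition {V : Type} [Fintype V] [DecidableEq V]
    (Gr : SimpleGraph V) [DecidableRel Gr.Adj] (lam : ℝ) : ℝ :=
  ∑ η : V → Bool, if Admissible Gr η then lam ^ numOcc η else 0

/-- The hard-core probability of a configuration:
`λ^{|η|}/Z_λ` if `η` is admissible, `0` otherwise. -/
def hcProb {V : Type} [Fintype V] [DecidableEq V]
    (Gr : SimpleGraph V) [DecidableRel Gr.Adj] (lam : ℝ) (η : V → Bool) : ℝ :=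
  if Admissible Gr η then lam ^ numOcc η / partition Gr lam else 0

/-!
Write `p_v(S, η)` for the probability that `v` is occupied given the spins `η` on `S`. If `v` is
free and no pinned neighbour of `v` is occupied, vacating `v` and its neighbours gives
`p_v = λR / (1 + λR)`, where `R` is the ratio of the partition functions with the closed
neighbourhood of `v` vacant and with only `v` vacant. Pinning the at most `Δ` neighbours to vacant
one at a time writes `R` as a product of conditional vacancy probabilities of the neighbours, each
of which sees the disagreement between `η` and `η'` one step closer. Since `x ↦ x / (1 + x)` is
1-Lipschitz on `[0, ∞)`, a product of factors in `[0, 1]` is 1-Lipschitz in each factor, and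
`p_v ≤ λ` for free `v`, induction on the distance `d` of the disagreement gives the bound
`(λ(Δ + 1))^d`, which is `2^(-d)` for `λ < 1/(2(Δ + 1))`.

On the probabilistic side, `Θ` need not be measurable; the events `{Θ ∈ A}` are still
null-measurable because the outer measures of the fibres `{Θ = σ}` add up to `1`.
-/

section Measure

variable {Ω α : Type*} [MeasurableSpace Ω] {μ : Measure Ω}

theorem nullMeasurableSet_of_measure_add_compl_le [IsFiniteMeasure μ] {s : Set Ω}
    (h : μ s + μ sᶜ ≤ μ Set.univ) : NullMeasurableSet s μ := by
  set M := (toMeasurable μ sᶜ)ᶜ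
  have hMs : M ⊆ s := Set.compl_subset_comm.2 (subset_toMeasurable _ _)
  have hMmeas : MeasurableSet M := (measurableSet_toMeasurable _ _).compl
  have hle : μ s ≤ μ M := by
    rw [measure_compl (measurableSet_toMeasurable _ _) (measure_ne_top _ _),
      measure_toMeasurable]
    exact ENNReal.le_sub_of_add_le_right (measure_ne_top _ _) h
  exact hMmeas.nullMeasurableSet.congr
    (ae_eq_of_subset_of_measure_ge hMs hle hMmeas.nullMeasurableSet (measure_ne_top _ _))

variable [IsProbabilityMeasure μ] [Fintype α] {X : Ω → α}

theorem measure_setOf_eq_sum_of_sum_le_one (hX : ∑ a, μ {ω | X ω = a} ≤ 1)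
    (P : α → Prop) [DecidablePred P] :
    μ {ω | P (X ω)} = ∑ a with P a, μ {ω | X ω = a} := by
  have union_bound : ∀ (Q : α → Prop) [DecidablePred Q],
      μ {ω | Q (X ω)} ≤ ∑ a with Q a, μ {ω | X ω = a} := fun Q _ => by
    have : {ω | Q (X ω)} = ⋃ a ∈ univ.filter Q, {ω | X ω = a} := by ext; simp
    exact this ▸ measure_biUnion_finset_le _ _
  have hsplit := Finset.sum_filter_add_sum_filter_not univ P fun a => μ {ω | X ω = a}
  refine le_antisymm (union_bound P) ?_
  have hcover : 1 ≤ μ {ω | P (X ω)} + ∑ a with ¬P a, μ {ω | X ω = a} := calc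
    1 = μ Set.univ := measure_univ.symm
    _ ≤ μ ({ω | P (X ω)} ∪ {ω | ¬P (X ω)}) := measure_mono fun ω _ => em (P (X ω))
    _ ≤ _ := (measure_union_le _ _).trans (add_le_add le_rfl (union_bound _))
  have hfin : ∑ a with ¬P a, μ {ω | X ω = a} ≠ ⊤ := ENNReal.sum_ne_top.2 fun _ _ => by finiteness
  exact (ENNReal.add_le_add_iff_right hfin).1 (hsplit.le.trans (hX.trans hcover))

theorem nullMeasurableSet_setOf (hX : ∑ a, μ {ω | X ω = a} ≤ 1)
    (P : α → Prop) [DecidablePred P] : NullMeasurableSet {ω | P (X ω)} μ := by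
  refine nullMeasurableSet_of_measure_add_compl_le ?_
  rw [Set.compl_ofPred, measure_setOf_eq_sum_of_sum_le_one hX,
    measure_setOf_eq_sum_of_sum_le_one hX fun a => ¬P a, Finset.sum_filter_add_sum_filter_not,
    measure_univ]
  exact hX

theorem cond_setOf_eq (hX : ∑ a, μ {ω | X ω = a} ≤ 1)
    (P Q : α → Prop) [DecidablePred P] :
    μ[{ω | Q (X ω)} | {ω | P (X ω)}] = (μ {ω | P (X ω)})⁻¹ * μ {ω | P (X ω) ∧ Q (X ω)} := by
  rw [ProbabilityTheory.cond, Measure.smul_apply, smul_eq_mul,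
    Measure.restrict_apply₀' (nullMeasurableSet_setOf hX P), Set.inter_comm]
  rfl

end Measure

theorem Admissible.mono {V : Type} {Gr : SimpleGraph V} {σ ρ : V → Bool}
    (hσ : Admissible Gr σ) (hρσ : ∀ w, ρ w = true → σ w = true) : Admissible Gr ρ :=
  fun v w hvw h => hσ v w hvw ⟨hρσ v h.1, hρσ w h.2⟩

theorem Admissible.update_true {V : Type} [DecidableEq V] {Gr : SimpleGraph V} {σ : V → Bool}
    (hσ : Admissible Gr σ) {v : V} (hnbr : ∀ u, Gr.Adj v u → σ u = false) :
    Admissible Gr (Function.update σ v true) := by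
  intro a b hab ⟨ha, hb⟩
  rcases eq_or_ne a v with rfl | hav
  · simp [Function.update_of_ne hab.ne.symm, hnbr b hab] at hb
  rcases eq_or_ne b v with rfl | hbv
  · simp [Function.update_of_ne hav, hnbr a hab.symm] at ha
  rw [Function.update_of_ne hav] at ha
  rw [Function.update_of_ne hbv] at hb
  exact hσ a b hab ⟨ha, hb⟩

theorem numOcc_update_false {V : Type} [Fintype V] [DecidableEq V] {σ : V → Bool} {v : V}
    (hv : σ v = true) : numOcc σ = numOcc (Function.update σ v false) + 1 := by
  have hfilter : univ.filter (fun w => Function.update σ v false w = true)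
      = (univ.filter fun w => σ w = true).erase v := by
    ext w
    rcases eq_or_ne w v with rfl | hwv <;> simp [Function.update_of_ne, *]
  rw [numOcc, numOcc, hfilter, Finset.card_erase_add_one (by simpa using hv)]

theorem update_update_of_eq {α β : Type*} [DecidableEq α] {f : α → β} {a : α} {c : β}
    (h : f a = c) (b : β) : Function.update (Function.update f a b) a c = f := by
  rw [Function.update_idem, ← h, Function.update_eq_self]

section Pinning

variable {V : Type} [Fintype V] [DecidableEq V] (Gr : SimpleGraph V) [DecidableRel Gr.Adj]
  (lam : ℝ)

def restrictedPartition (P : (V → Bool) → Prop) [DecidablePred P] : ℝ :=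
  ∑ σ with Admissible Gr σ ∧ P σ, lam ^ numOcc σ

def pinnedZ (S : Finset V) (η : V → Bool) : ℝ :=
  restrictedPartition Gr lam fun σ => ∀ w ∈ S, σ w = η w

/-- `ℙ(Θ_v = τ | Θ_S = η)` for the hard-core measure (`0` if the conditioning event is
impossible). -/
def condProb (v : V) (τ : Bool) (S : Finset V) (η : V → Bool) : ℝ :=
  restrictedPartition Gr lam (fun σ => (∀ w ∈ S, σ w = η w) ∧ σ v = τ) / pinnedZ Gr lam S η

variable {Gr lam}

theorem restrictedPartition_nonneg (hl : 0 ≤ lam) (P : (V → Bool) → Prop) [DecidablePred P] :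
    0 ≤ restrictedPartition Gr lam P :=
  Finset.sum_nonneg fun _ _ => pow_nonneg hl _

theorem restrictedPartition_mono (hl : 0 ≤ lam) {P Q : (V → Bool) → Prop} [DecidablePred P]
    [DecidablePred Q] (hPQ : ∀ σ, P σ → Q σ) :
    restrictedPartition Gr lam P ≤ restrictedPartition Gr lam Q :=
  Finset.sum_le_sum_of_subset_of_nonneg
    (fun σ hσ => by simp only [Finset.mem_filter] at hσ ⊢; exact ⟨hσ.1, hσ.2.1, hPQ σ hσ.2.2⟩)
    fun _ _ _ => pow_nonneg hl _

theorem restrictedPartition_congr {P Q : (V → Bool) → Prop} [DecidablePred P]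
    [DecidablePred Q] (hPQ : ∀ σ, P σ ↔ Q σ) :
    restrictedPartition Gr lam P = restrictedPartition Gr lam Q := by
  simp only [restrictedPartition, hPQ]

theorem restrictedPartition_pos_iff (hl : 0 < lam) {P : (V → Bool) → Prop} [DecidablePred P] :
    0 < restrictedPartition Gr lam P ↔ ∃ σ, Admissible Gr σ ∧ P σ := by
  rw [restrictedPartition, Finset.sum_pos_iff_of_nonneg fun _ _ => pow_nonneg hl.le _]
  simp [pow_pos hl]

theorem restrictedPartition_add_not (P Q : (V → Bool) → Prop) [DecidablePred P]
    [DecidablePred Q] :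
    restrictedPartition Gr lam (fun σ => P σ ∧ Q σ)
      + restrictedPartition Gr lam (fun σ => P σ ∧ ¬Q σ) = restrictedPartition Gr lam P := by
  rw [restrictedPartition, restrictedPartition, restrictedPartition,
    ← Finset.sum_filter_add_sum_filter_not (univ.filter fun σ => Admissible Gr σ ∧ P σ) Q,
    Finset.filter_filter, Finset.filter_filter]
  simp only [and_assoc]

theorem partition_eq_restrictedPartition :
    partition Gr lam = restrictedPartition Gr lam fun _ => True := by
  simp [partition, restrictedPartition, Finset.sum_filter]

theorem partition_pos (hl : 0 < lam) : 0 < partition Gr lam := by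
  rw [partition_eq_restrictedPartition, restrictedPartition_pos_iff hl]
  exact ⟨fun _ => false, fun _ _ _ h => Bool.false_ne_true h.1, trivial⟩

theorem sum_hcProb_filter (P : (V → Bool) → Prop) [DecidablePred P] :
    ∑ σ with P σ, hcProb Gr lam σ = restrictedPartition Gr lam P / partition Gr lam := by
  simp only [hcProb, restrictedPartition, Finset.sum_div]
  rw [← Finset.sum_filter, Finset.filter_filter]
  simp only [and_comm]

variable {S T : Finset V} {η η' : V → Bool} {v : V}

theorem restrictedPartition_eq_zero {P : (V → Bool) → Prop} [DecidablePred P]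
    (hP : ∀ σ, Admissible Gr σ → ¬P σ) : restrictedPartition Gr lam P = 0 :=
  Finset.sum_eq_zero fun σ hσ => ((hP σ (mem_filter.1 hσ).2.1) (mem_filter.1 hσ).2.2).elim

theorem pinnedZ_nonneg (hl : 0 ≤ lam) (S : Finset V) (η : V → Bool) :
    0 ≤ pinnedZ Gr lam S η :=
  restrictedPartition_nonneg hl _

theorem pinnedZ_anti (hl : 0 ≤ lam) (hST : S ⊆ T) (η : V → Bool) :
    pinnedZ Gr lam T η ≤ pinnedZ Gr lam S η :=
  restrictedPartition_mono hl fun _ h w hw => h w (hST hw)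

theorem pinnedZ_congr (h : ∀ w ∈ S, η w = η' w) : pinnedZ Gr lam S η = pinnedZ Gr lam S η' :=
  restrictedPartition_congr fun σ => forall₂_congr fun w hw => by rw [h w hw]

theorem condProb_congr (h : ∀ w ∈ S, η w = η' w) (τ : Bool) :
    condProb Gr lam v τ S η = condProb Gr lam v τ S η' := by
  rw [condProb, condProb, pinnedZ_congr h,
    restrictedPartition_congr fun σ => and_congr_left' <| forall₂_congr fun w hw => by rw [h w hw]]

theorem pinnedZ_insert_div (u : V) (T : Finset V) (ζ : V → Bool) :
    pinnedZ Gr lam (insert u T) ζ / pinnedZ Gr lam T ζ = condProb Gr lam u (ζ u) T ζ := by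
  rw [condProb, pinnedZ,
    restrictedPartition_congr fun σ => by rw [Finset.forall_mem_insert, and_comm]]

theorem condProb_nonneg (hl : 0 ≤ lam) (v : V) (τ : Bool) (S : Finset V) (η : V → Bool) :
    0 ≤ condProb Gr lam v τ S η :=
  div_nonneg (restrictedPartition_nonneg hl _) (pinnedZ_nonneg hl S η)

theorem condProb_le_one (hl : 0 ≤ lam) (v : V) (τ : Bool) (S : Finset V) (η : V → Bool) :
    condProb Gr lam v τ S η ≤ 1 :=
  div_le_one_of_le₀ (restrictedPartition_mono hl fun _ h => h.1) (pinnedZ_nonneg hl S η)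

theorem condProb_false (hZ : 0 < pinnedZ Gr lam S η) :
    condProb Gr lam v false S η = 1 - condProb Gr lam v true S η := by
  have hsplit := restrictedPartition_add_not (Gr := Gr) (lam := lam)
    (fun σ => ∀ w ∈ S, σ w = η w) (fun σ => σ v = true)
  simp only [Bool.not_eq_true] at hsplit
  rw [condProb, condProb, eq_sub_iff_add_eq, ← add_div, add_comm, hsplit]
  exact div_self hZ.ne'

theorem condProb_of_mem (hv : v ∈ S) (τ : Bool) (hZ : 0 < pinnedZ Gr lam S η) :
    condProb Gr lam v τ S η = if η v = τ then 1 else 0 := by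
  split_ifs with hτ
  · rw [condProb, restrictedPartition_congr fun σ => and_iff_left_of_imp fun h => (h v hv).trans hτ]
    exact div_self hZ.ne'
  · rw [condProb, restrictedPartition_eq_zero fun σ _ h => hτ ((h.1 v hv).symm.trans h.2), zero_div]

theorem condProb_eq_zero_of_adj {u : V} (hvu : Gr.Adj v u) (hu : u ∈ S) (hηu : η u = true) :
    condProb Gr lam v true S η = 0 := by
  rw [condProb, restrictedPartition_eq_zero fun σ hσ h => hσ v u hvu ⟨h.2, (h.1 u hu).trans hηu⟩,
    zero_div]

end Pinning

section Recursion

variable {V : Type} [Fintype V] [DecidableEq V] {Gr : SimpleGraph V} [DecidableRel Gr.Adj]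
  {lam : ℝ} {S : Finset V} {η : V → Bool} {v : V}

/-- Vacating `v` injects the configurations with `v` occupied into all configurations,
dividing the weight by `λ`. -/
theorem condProb_true_le (hl : 0 ≤ lam) (hv : v ∉ S) : condProb Gr lam v true S η ≤ lam := by
  set A := univ.filter fun σ : V → Bool => Admissible Gr σ ∧ (∀ w ∈ S, σ w = η w) ∧ σ v = true
  have hinj : Set.InjOn (Function.update · v false) (A : Set (V → Bool)) := by
    intro σ hσ ρ hρ h
    simp only [A, coe_filter, Set.mem_ofPred_eq, mem_univ, true_and] at hσ hρ
    rw [← update_update_of_eq hσ.2.2 false, ← update_update_of_eq hρ.2.2 false]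
    exact congrArg (Function.update · v true) h
  have himage : A.image (Function.update · v false) ⊆
      univ.filter fun σ => Admissible Gr σ ∧ ∀ w ∈ S, σ w = η w := by
    simp only [Finset.image_subset_iff, mem_filter, mem_univ, true_and, A]
    refine fun σ ⟨hσ, hagree, _⟩ => ⟨hσ.mono fun w => ?_, fun w hw => ?_⟩
    · rcases eq_or_ne w v with rfl | hwv <;> simp [Function.update_of_ne, *]
    · rw [Function.update_of_ne (ne_of_mem_of_not_mem hw hv), hagree w hw]
  have hnum : restrictedPartition Gr lam (fun σ => (∀ w ∈ S, σ w = η w) ∧ σ v = true)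
      ≤ lam * pinnedZ Gr lam S η := calc
    _ = lam * ∑ σ ∈ A.image (Function.update · v false), lam ^ numOcc σ := by
      rw [Finset.sum_image hinj, Finset.mul_sum]
      exact Finset.sum_congr rfl fun σ hσ => by
        rw [numOcc_update_false (mem_filter.1 hσ).2.2.2, pow_succ']
    _ ≤ _ := mul_le_mul_of_nonneg_left (Finset.sum_le_sum_of_subset_of_nonneg himage
      fun _ _ _ => pow_nonneg hl _) hl
  exact div_le_of_le_mul₀ (pinnedZ_nonneg hl S η) hl hnum

/-- Vacating `v` is a bijection, dividing the weight by `λ`, onto the configurations with the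
closed neighbourhood of `v` vacant. -/
theorem restrictedPartition_occupied_eq (hv : v ∉ S)
    (hη : ∀ u, u = v ∨ Gr.Adj v u → η u = false) :
    restrictedPartition Gr lam (fun σ => (∀ w ∈ S, σ w = η w) ∧ σ v = true)
      = lam * pinnedZ Gr lam (insert v S ∪ Gr.neighborFinset v) η := by
  rw [restrictedPartition, pinnedZ, restrictedPartition, Finset.mul_sum]
  refine Finset.sum_nbij' (Function.update · v false) (Function.update · v true) ?_ ?_ ?_ ?_ ?_
  · simp only [mem_filter, mem_univ, true_and]
    rintro σ ⟨hσ, hagree, hσv⟩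
    refine ⟨hσ.mono fun w => ?_, fun w hw => ?_⟩
    · rcases eq_or_ne w v with rfl | hwv <;> simp [Function.update_of_ne, *]
    rcases eq_or_ne w v with rfl | hwv
    · simp [hη w (Or.inl rfl)]
    rw [Function.update_of_ne hwv]
    rcases Finset.mem_union.1 hw with hw | hw
    · exact hagree w ((Finset.mem_insert.1 hw).resolve_left hwv)
    · have hvw := (Gr.mem_neighborFinset v w).1 hw
      rw [hη w (Or.inr hvw)]
      exact Bool.eq_false_iff.2 fun h => hσ v w hvw ⟨hσv, h⟩
  · simp only [mem_filter, mem_univ, true_and]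
    rintro σ ⟨hσ, hagree⟩
    have hnbr : ∀ u, Gr.Adj v u → σ u = false := fun u hu =>
      (hagree u (by simp [hu])).trans (hη u (Or.inr hu))
    refine ⟨hσ.update_true hnbr, fun w hw => ?_, by simp⟩
    rw [Function.update_of_ne (ne_of_mem_of_not_mem hw hv), hagree w (by simp [hw])]
  · intro σ hσ
    exact update_update_of_eq (mem_filter.1 hσ).2.2.2 false
  · intro σ hσ
    exact update_update_of_eq (((mem_filter.1 hσ).2.2 v (by simp)).trans (hη v (Or.inl rfl))) true
  · intro σ hσ
    rw [numOcc_update_false (mem_filter.1 hσ).2.2.2, pow_succ']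

theorem condProb_true_eq (hv : v ∉ S) (hη : ∀ u, u = v ∨ Gr.Adj v u → η u = false)
    (hZ : 0 < pinnedZ Gr lam (insert v S) η) :
    condProb Gr lam v true S η =
      lam * (pinnedZ Gr lam (insert v S ∪ Gr.neighborFinset v) η / pinnedZ Gr lam (insert v S) η)
        / (1 + lam * (pinnedZ Gr lam (insert v S ∪ Gr.neighborFinset v) η
          / pinnedZ Gr lam (insert v S) η)) := by
  have hvacant : restrictedPartition Gr lam (fun σ => (∀ w ∈ S, σ w = η w) ∧ ¬σ v = true)
      = pinnedZ Gr lam (insert v S) η :=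
    restrictedPartition_congr fun σ => by
      rw [Finset.forall_mem_insert, hη v (Or.inl rfl), Bool.not_eq_true, and_comm]
  have hsplit := restrictedPartition_add_not (Gr := Gr) (lam := lam)
    (fun σ => ∀ w ∈ S, σ w = η w) (fun σ => σ v = true)
  rw [condProb, pinnedZ, ← hsplit, hvacant, restrictedPartition_occupied_eq hv hη]
  field_simp
  ring

theorem pinnedZ_pos_of_vacant (hl : 0 < lam) (hZ : 0 < pinnedZ Gr lam S η) {T : Finset V}
    {ζ : V → Bool} (hζ : ∀ w ∈ T, ζ w = false ∨ w ∈ S ∧ ζ w = η w) :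
    0 < pinnedZ Gr lam T ζ := by
  obtain ⟨σ, hσ, hagree⟩ := (restrictedPartition_pos_iff hl).1 hZ
  refine (restrictedPartition_pos_iff hl).2
    ⟨fun w => if w ∈ T then ζ w else σ w, hσ.mono fun w hw => ?_, fun w hw => if_pos hw⟩
  split_ifs at hw with hwT
  · rcases hζ w hwT with h | ⟨hwS, h⟩
    · simp [h] at hw
    · rw [hagree w hwS, ← h, hw]
  · exact hw

end Recursion

theorem abs_mul_sub_mul_le {a b a' b' : ℝ} (ha : |a| ≤ 1) (hb' : |b'| ≤ 1) :
    |a * b - a' * b'| ≤ |a - a'| + |b - b'| := calc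
  |a * b - a' * b'| = |a * (b - b') + (a - a') * b'| := by ring_nf
  _ ≤ |a| * |b - b'| + |a - a'| * |b'| := (abs_add_le _ _).trans_eq (by rw [abs_mul, abs_mul])
  _ ≤ 1 * |b - b'| + |a - a'| * 1 := add_le_add (mul_le_mul_of_nonneg_right ha (abs_nonneg _))
    (mul_le_mul_of_nonneg_left hb' (abs_nonneg _))
  _ = |a - a'| + |b - b'| := by ring

theorem abs_div_one_add_sub_div_one_add_le {a b : ℝ} (ha : 0 ≤ a) (hb : 0 ≤ b) :
    |a / (1 + a) - b / (1 + b)| ≤ |a - b| := by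
  have ha1 : 0 < 1 + a := by linarith
  have hb1 : 0 < 1 + b := by linarith
  rw [div_sub_div _ _ ha1.ne' hb1.ne', show a * (1 + b) - (1 + a) * b = a - b by ring, abs_div,
    abs_of_pos (mul_pos ha1 hb1)]
  exact div_le_self (abs_nonneg _) (by nlinarith)

section Decay

variable {V : Type} [Fintype V] [DecidableEq V] {Gr : SimpleGraph V} [DecidableRel Gr.Adj]
  {lam : ℝ}

theorem abs_condProb_le_one (hl : 0 ≤ lam) (v : V) (τ : Bool) (S : Finset V) (η : V → Bool) :
    |condProb Gr lam v τ S η| ≤ 1 := by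
  rw [abs_of_nonneg (condProb_nonneg hl v τ S η)]
  exact condProb_le_one hl v τ S η

theorem abs_pinnedZ_div_le_one (hl : 0 ≤ lam) {S T : Finset V} (hST : S ⊆ T) (η : V → Bool) :
    |pinnedZ Gr lam T η / pinnedZ Gr lam S η| ≤ 1 := by
  rw [abs_of_nonneg (div_nonneg (pinnedZ_nonneg hl T η) (pinnedZ_nonneg hl S η))]
  exact div_le_one_of_le₀ (pinnedZ_anti hl hST η) (pinnedZ_nonneg hl S η)

/-- Pinning the sites of `N` to vacant one at a time writes the ratio as a product of
`|N|` conditional probabilities, so an `ε`-bound on each factor adds up along the product. -/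
theorem abs_pinnedZ_union_div_sub_le (hl : 0 < lam) {T N : Finset V} {ζ ζ' : V → Bool} {ε : ℝ}
    (hN : ∀ u ∈ N, ζ u = false ∧ ζ' u = false)
    (hZ : 0 < pinnedZ Gr lam (T ∪ N) ζ) (hZ' : 0 < pinnedZ Gr lam (T ∪ N) ζ')
    (hstep : ∀ u ∈ N, ∀ T' ⊆ T ∪ N, 0 < pinnedZ Gr lam T' ζ → 0 < pinnedZ Gr lam T' ζ' →
      |condProb Gr lam u true T' ζ - condProb Gr lam u true T' ζ'| ≤ ε) :
    |pinnedZ Gr lam (T ∪ N) ζ / pinnedZ Gr lam T ζ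
      - pinnedZ Gr lam (T ∪ N) ζ' / pinnedZ Gr lam T ζ'| ≤ N.card * ε := by
  induction N using Finset.induction_on with
  | empty =>
    simp only [Finset.union_empty] at hZ hZ' ⊢
    simp [div_self hZ.ne', div_self hZ'.ne']
  | insert u N hu ih =>
    have hsub : T ∪ N ⊆ T ∪ insert u N := union_subset_union_right (subset_insert u N)
    have hZN := hZ.trans_le (pinnedZ_anti hl.le hsub ζ)
    have hZN' := hZ'.trans_le (pinnedZ_anti hl.le hsub ζ')
    have hfactor : ∀ ξ : V → Bool, 0 < pinnedZ Gr lam (T ∪ N) ξ →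
        pinnedZ Gr lam (T ∪ insert u N) ξ / pinnedZ Gr lam T ξ
          = condProb Gr lam u (ξ u) (T ∪ N) ξ * (pinnedZ Gr lam (T ∪ N) ξ / pinnedZ Gr lam T ξ) :=
      fun ξ hξ => by rw [← pinnedZ_insert_div, div_mul_div_cancel₀ hξ.ne', union_insert]
    rw [hfactor ζ hZN, hfactor ζ' hZN', (hN u (mem_insert_self u N)).1,
      (hN u (mem_insert_self u N)).2]
    calc _ ≤ |condProb Gr lam u false (T ∪ N) ζ - condProb Gr lam u false (T ∪ N) ζ'|
          + |pinnedZ Gr lam (T ∪ N) ζ / pinnedZ Gr lam T ζ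
            - pinnedZ Gr lam (T ∪ N) ζ' / pinnedZ Gr lam T ζ'| :=
        abs_mul_sub_mul_le (abs_condProb_le_one hl.le _ _ _ _)
          (abs_pinnedZ_div_le_one hl.le subset_union_left ζ')
      _ ≤ ε + N.card * ε := by
        refine add_le_add ?_ (ih (fun w hw => hN w (mem_insert_of_mem hw)) hZN hZN'
          fun w hw T' hT' => hstep w (mem_insert_of_mem hw) T' (hT'.trans hsub))
        rw [condProb_false hZN, condProb_false hZN', sub_sub_sub_cancel_left, abs_sub_comm]
        exact hstep u (mem_insert_self u N) (T ∪ N) hsub hZN hZN'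
      _ = (insert u N).card * ε := by rw [card_insert_of_notMem hu]; push_cast; ring

end Decay

section Vacate

variable {V : Type} [DecidableEq V] (Gr : SimpleGraph V) [DecidableRel Gr.Adj]

def vacateNbhd (v : V) (η : V → Bool) : V → Bool :=
  fun w => if w = v ∨ Gr.Adj v w then false else η w

variable {Gr}

theorem vacateNbhd_of_nbhd {v w : V} (η : V → Bool) (hw : w = v ∨ Gr.Adj v w) :
    vacateNbhd Gr v η w = false :=
  if_pos hw

theorem vacateNbhd_of_not_nbhd {v w : V} (η : V → Bool) (hw : ¬(w = v ∨ Gr.Adj v w)) :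
    vacateNbhd Gr v η w = η w :=
  if_neg hw

theorem vacateNbhd_eqOn {v : V} {S : Finset V} {η : V → Bool} (hv : v ∉ S)
    (hη : ∀ u ∈ S, Gr.Adj v u → η u = false) : ∀ w ∈ S, η w = vacateNbhd Gr v η w := by
  intro w hw
  by_cases hnbhd : w = v ∨ Gr.Adj v w
  · rw [vacateNbhd_of_nbhd η hnbhd]
    exact hnbhd.elim (fun hwv => absurd (hwv ▸ hw) hv) (hη w hw)
  · exact (vacateNbhd_of_not_nbhd η hnbhd).symm

end Vacate

/-- `d̃(v, η, η') ≥ d`, stated with walks since `Gr.dist` is `0` between different components. -/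
def AgreeNear {V : Type} (Gr : SimpleGraph V) (d : ℕ) (v : V) (S : Finset V)
    (η η' : V → Bool) : Prop :=
  ∀ w ∈ S, η w ≠ η' w → ∀ p : Gr.Walk v w, d ≤ p.length

section Mixing

variable {V : Type} [Fintype V] [DecidableEq V] {Gr : SimpleGraph V} [DecidableRel Gr.Adj]
  {lam : ℝ} {Δ : ℕ}

theorem abs_condProb_sub_le_succ (hl : 0 < lam) (hΔ : Gr.maxDegree ≤ Δ) {d : ℕ}
    (ih : ∀ u T ζ ζ', 0 < pinnedZ Gr lam T ζ → 0 < pinnedZ Gr lam T ζ' → AgreeNear Gr d u T ζ ζ' →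
      |condProb Gr lam u true T ζ - condProb Gr lam u true T ζ'| ≤ (lam * (Δ + 1)) ^ d)
    {v : V} {S : Finset V} {η η' : V → Bool} (hv : v ∉ S)
    (hη : ∀ u ∈ S, Gr.Adj v u → η u = false) (hη' : ∀ u ∈ S, Gr.Adj v u → η' u = false)
    (hZ : 0 < pinnedZ Gr lam S η) (hZ' : 0 < pinnedZ Gr lam S η')
    (hfar : AgreeNear Gr (d + 1) v S η η') :
    |condProb Gr lam v true S η - condProb Gr lam v true S η'| ≤ (lam * (Δ + 1)) ^ (d + 1) := by
  set N := Gr.neighborFinset v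
  set K := lam * (Δ + 1)
  have hmem : ∀ w ∈ insert v S ∪ N, (w = v ∨ Gr.Adj v w) ∨ w ∈ S := fun w hw => by
    simp only [N, mem_union, mem_insert, SimpleGraph.mem_neighborFinset] at hw
    tauto
  have hpos : ∀ {ξ : V → Bool}, 0 < pinnedZ Gr lam S ξ →
      0 < pinnedZ Gr lam (insert v S ∪ N) (vacateNbhd Gr v ξ) := fun hξ =>
    pinnedZ_pos_of_vacant hl hξ fun w hw => by
      by_cases hnbhd : w = v ∨ Gr.Adj v w
      · exact Or.inl (vacateNbhd_of_nbhd _ hnbhd)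
      · exact Or.inr ⟨(hmem w hw).resolve_left hnbhd, vacateNbhd_of_not_nbhd _ hnbhd⟩
  have hZN := hpos hZ
  have hZN' := hpos hZ'
  rw [condProb_congr (vacateNbhd_eqOn hv hη), condProb_congr (vacateNbhd_eqOn hv hη'),
    condProb_true_eq hv (fun u => vacateNbhd_of_nbhd η)
      (hZN.trans_le (pinnedZ_anti hl.le subset_union_left _)),
    condProb_true_eq hv (fun u => vacateNbhd_of_nbhd η')
      (hZN'.trans_le (pinnedZ_anti hl.le subset_union_left _))]
  have hratio := abs_pinnedZ_union_div_sub_le hl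
    (fun u hu => ⟨vacateNbhd_of_nbhd η (Or.inr ((Gr.mem_neighborFinset v u).1 hu)),
      vacateNbhd_of_nbhd η' (Or.inr ((Gr.mem_neighborFinset v u).1 hu))⟩) hZN hZN'
    fun u hu T' hT' hζ hζ' => ih u T' _ _ hζ hζ' fun w hw hne p => by
      have hnbhd : ¬(w = v ∨ Gr.Adj v w) := fun h =>
        hne (by rw [vacateNbhd_of_nbhd η h, vacateNbhd_of_nbhd η' h])
      rw [vacateNbhd_of_not_nbhd η hnbhd, vacateNbhd_of_not_nbhd η' hnbhd] at hne
      simpa using hfar w ((hmem w (hT' hw)).resolve_left hnbhd) hne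
        (.cons ((Gr.mem_neighborFinset v u).1 hu) p)
  set R := pinnedZ Gr lam (insert v S ∪ N) (vacateNbhd Gr v η)
    / pinnedZ Gr lam (insert v S) (vacateNbhd Gr v η)
  set R' := pinnedZ Gr lam (insert v S ∪ N) (vacateNbhd Gr v η')
    / pinnedZ Gr lam (insert v S) (vacateNbhd Gr v η')
  have hdeg : (N.card : ℝ) ≤ Δ := by
    rw [SimpleGraph.card_neighborFinset_eq_degree]
    exact_mod_cast (Gr.degree_le_maxDegree v).trans hΔ
  calc _ ≤ |lam * R - lam * R'| := abs_div_one_add_sub_div_one_add_le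
        (mul_nonneg hl.le (div_nonneg (pinnedZ_nonneg hl.le _ _) (pinnedZ_nonneg hl.le _ _)))
        (mul_nonneg hl.le (div_nonneg (pinnedZ_nonneg hl.le _ _) (pinnedZ_nonneg hl.le _ _)))
    _ = lam * |R - R'| := by rw [← mul_sub, abs_mul, abs_of_pos hl]
    _ ≤ lam * (Δ * K ^ d) := by gcongr; exact hratio.trans (by gcongr)
    _ ≤ lam * (Δ + 1) * K ^ d := by rw [← mul_assoc]; gcongr; linarith
    _ = K ^ (d + 1) := by rw [pow_succ, mul_comm]

theorem abs_condProb_true_sub_le_pow (hl : 0 < lam) (hΔ : Gr.maxDegree ≤ Δ) (d : ℕ) {v : V}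
    {S : Finset V} {η η' : V → Bool} (hZ : 0 < pinnedZ Gr lam S η)
    (hZ' : 0 < pinnedZ Gr lam S η') (hfar : AgreeNear Gr d v S η η') :
    |condProb Gr lam v true S η - condProb Gr lam v true S η'| ≤ (lam * (Δ + 1)) ^ d := by
  induction d generalizing v S η η' with
  | zero =>
    rw [pow_zero]
    exact abs_sub_le_of_nonneg_of_le (condProb_nonneg hl.le ..) (condProb_le_one hl.le ..)
      (condProb_nonneg hl.le ..) (condProb_le_one hl.le ..)
  | succ d ih =>
    by_cases hv : v ∈ S
    · have hηv : η v = η' v := by_contra fun h => by simpa using hfar v hv h .nil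
      rw [condProb_of_mem hv true hZ, condProb_of_mem hv true hZ', hηv, sub_self, abs_zero]
      positivity
    rcases d with _ | d
    · calc _ ≤ lam := abs_sub_le_of_nonneg_of_le (condProb_nonneg hl.le ..)
            (condProb_true_le hl.le hv) (condProb_nonneg hl.le ..) (condProb_true_le hl.le hv)
        _ ≤ (lam * (Δ + 1)) ^ (0 + 1) := by rw [zero_add, pow_one]; nlinarith
    have hnbr : ∀ u ∈ S, Gr.Adj v u → η u = η' u := fun u hu hvu =>
      by_contra fun h => by simpa using hfar u hu h (.cons hvu .nil)
    by_cases hblocked : ∃ u ∈ S, Gr.Adj v u ∧ η u = true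
    · obtain ⟨u, hu, hvu, hηu⟩ := hblocked
      rw [condProb_eq_zero_of_adj hvu hu hηu,
        condProb_eq_zero_of_adj hvu hu ((hnbr u hu hvu).symm.trans hηu), sub_self, abs_zero]
      positivity
    simp only [not_exists, not_and, Bool.not_eq_true] at hblocked
    exact abs_condProb_sub_le_succ hl hΔ (fun u T ζ ζ' => ih) hv hblocked
      (fun u hu hvu => (hnbr u hu hvu).symm.trans (hblocked u hu hvu)) hZ hZ' hfar

theorem abs_condProb_sub_le_pow (hl : 0 < lam) (hΔ : Gr.maxDegree ≤ Δ) (d : ℕ) {v : V}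
    (τ : Bool) {S : Finset V} {η η' : V → Bool} (hZ : 0 < pinnedZ Gr lam S η)
    (hZ' : 0 < pinnedZ Gr lam S η') (hfar : AgreeNear Gr d v S η η') :
    |condProb Gr lam v τ S η - condProb Gr lam v τ S η'| ≤ (lam * (Δ + 1)) ^ d := by
  cases τ
  · rw [condProb_false hZ, condProb_false hZ', sub_sub_sub_cancel_left, abs_sub_comm]
    exact abs_condProb_true_sub_le_pow hl hΔ d hZ hZ' hfar
  · exact abs_condProb_true_sub_le_pow hl hΔ d hZ hZ' hfar

end Mixing

section Law

variable {V : Type} [Fintype V] [DecidableEq V] {Gr : SimpleGraph V} [DecidableRel Gr.Adj]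
  {lam : ℝ} {Ω : Type*} [MeasurableSpace Ω] {μ : Measure Ω} {Θ : Ω → V → Bool}

theorem hcProb_nonneg (hl : 0 < lam) (σ : V → Bool) : 0 ≤ hcProb Gr lam σ := by
  unfold hcProb
  split_ifs
  exacts [div_nonneg (pow_nonneg hl.le _) (partition_pos hl).le, le_rfl]

theorem sum_hcProb (hl : 0 < lam) : ∑ σ, hcProb Gr lam σ = 1 := by
  simpa [← partition_eq_restrictedPartition, div_self (partition_pos hl).ne'] using
    sum_hcProb_filter (Gr := Gr) (lam := lam) fun _ => True

theorem sum_measure_fiber_le_one (hl : 0 < lam)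
    (hΘ : ∀ σ, μ {ω | Θ ω = σ} = ENNReal.ofReal (hcProb Gr lam σ)) :
    ∑ σ, μ {ω | Θ ω = σ} ≤ 1 := by
  simp_rw [hΘ, ← ENNReal.ofReal_sum_of_nonneg fun σ _ => hcProb_nonneg hl σ, sum_hcProb hl,
    ENNReal.ofReal_one, le_rfl]

theorem measure_setOf_eq_ofReal [IsProbabilityMeasure μ] (hl : 0 < lam)
    (hΘ : ∀ σ, μ {ω | Θ ω = σ} = ENNReal.ofReal (hcProb Gr lam σ))
    (P : (V → Bool) → Prop) [DecidablePred P] :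
    μ {ω | P (Θ ω)} = ENNReal.ofReal (restrictedPartition Gr lam P / partition Gr lam) := by
  simp_rw [measure_setOf_eq_sum_of_sum_le_one (sum_measure_fiber_le_one hl hΘ) P, hΘ,
    ← ENNReal.ofReal_sum_of_nonneg fun σ _ => hcProb_nonneg hl σ, sum_hcProb_filter]

theorem pinnedZ_pos_of_measure_ne_zero [IsProbabilityMeasure μ] (hl : 0 < lam)
    (hΘ : ∀ σ, μ {ω | Θ ω = σ} = ENNReal.ofReal (hcProb Gr lam σ)) {S : Finset V}
    {η : V → Bool} (h : μ {ω | ∀ w ∈ S, Θ ω w = η w} ≠ 0) : 0 < pinnedZ Gr lam S η := by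
  rw [measure_setOf_eq_ofReal hl hΘ fun σ => ∀ w ∈ S, σ w = η w, Ne, ENNReal.ofReal_eq_zero,
    not_le, div_pos_iff_of_pos_right (partition_pos hl)] at h
  exact h

theorem toReal_cond_eq_condProb [IsProbabilityMeasure μ] (hl : 0 < lam)
    (hΘ : ∀ σ, μ {ω | Θ ω = σ} = ENNReal.ofReal (hcProb Gr lam σ)) (v : V) (τ : Bool)
    (S : Finset V) (η : V → Bool) :
    (μ[{ω | Θ ω v = τ} | {ω | ∀ w ∈ S, Θ ω w = η w}]).toReal = condProb Gr lam v τ S η := by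
  have hnonneg : ∀ (P : (V → Bool) → Prop) [DecidablePred P],
      0 ≤ restrictedPartition Gr lam P / partition Gr lam := fun _ _ =>
    div_nonneg (restrictedPartition_nonneg hl.le _) (partition_pos hl).le
  rw [cond_setOf_eq (sum_measure_fiber_le_one hl hΘ) (fun σ => ∀ w ∈ S, σ w = η w)
      fun σ => σ v = τ, measure_setOf_eq_ofReal hl hΘ fun σ => ∀ w ∈ S, σ w = η w,
    measure_setOf_eq_ofReal hl hΘ fun σ => (∀ w ∈ S, σ w = η w) ∧ σ v = τ,
    ENNReal.toReal_mul, ENNReal.toReal_inv, ENNReal.toReal_ofReal (hnonneg _),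
    ENNReal.toReal_ofReal (hnonneg _), inv_div, div_mul_div_cancel₀' (partition_pos hl).ne']
  rfl

end Law

/-- **Lemma A.2 (strong spatial mixing of the hard-core model)**. -/
theorem hard_core_strong_spatial_mixing (Δ : ℕ) :
    ∃ lamc : ℝ, 0 < lamc ∧
      ∀ lam : ℝ, 0 < lam → lam < lamc →
        ∃ c : ℝ, 0 < c ∧ ∃ γ : ℝ, 0 < γ ∧
          ∀ (V : Type) [Fintype V] [DecidableEq V]
            (Gr : SimpleGraph V) [DecidableRel Gr.Adj],
            Gr.maxDegree ≤ Δ →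
            ∀ (Ω : Type) [MeasureSpace Ω] [IsProbabilityMeasure (ℙ : Measure Ω)]
              (Θ : Ω → V → Bool),
              (∀ η₀ : V → Bool, ℙ {ω | Θ ω = η₀} = ENNReal.ofReal (hcProb Gr lam η₀)) →
              ∀ (v : V) (S₁ : Finset V) (τ : Bool) (η η' : V → Bool),
                ℙ {ω | ∀ w ∈ S₁, Θ ω w = η w} ≠ 0 →
                ℙ {ω | ∀ w ∈ S₁, Θ ω w = η' w} ≠ 0 →
                |((ℙ : Measure Ω)[|{ω | ∀ w ∈ S₁, Θ ω w = η w}] {ω | Θ ω v = τ}).toReal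
                  - ((ℙ : Measure Ω)[|{ω | ∀ w ∈ S₁, Θ ω w = η' w}] {ω | Θ ω v = τ}).toReal|
                  ≤ c * Real.exp (-γ *
                      ((sInf {n : ℕ | ∃ w ∈ S₁, η w ≠ η' w ∧ Gr.dist v w = n} : ℕ) : ℝ)) := by
  refine ⟨1 / (2 * ((Δ : ℝ) + 1)), by positivity, fun lam hl hlt => ?_⟩
  refine ⟨1, one_pos, Real.log 2, Real.log_pos one_lt_two, ?_⟩
  intro V _ _ Gr _ hΔ Ω _ _ Θ hΘ v S₁ τ η η' hη hη'
  set d := sInf {n : ℕ | ∃ w ∈ S₁, η w ≠ η' w ∧ Gr.dist v w = n}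
  have hfar : AgreeNear Gr d v S₁ η η' := fun w hw hne p =>
    le_trans (Nat.sInf_le ⟨w, hw, hne, rfl⟩) (SimpleGraph.dist_le p)
  have hK : lam * (Δ + 1) ≤ 1 / 2 := by
    rw [lt_div_iff₀ (by positivity)] at hlt
    linarith
  rw [toReal_cond_eq_condProb hl hΘ, toReal_cond_eq_condProb hl hΘ]
  calc _ ≤ (lam * (Δ + 1)) ^ d := abs_condProb_sub_le_pow hl hΔ d τ
        (pinnedZ_pos_of_measure_ne_zero hl hΘ hη) (pinnedZ_pos_of_measure_ne_zero hl hΘ hη') hfar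
    _ ≤ (1 / 2) ^ d := pow_le_pow_left₀ (by positivity) hK d
    _ = 1 * Real.exp (-Real.log 2 * d) := by
      rw [one_mul, neg_mul, Real.exp_neg, mul_comm, Real.exp_nat_mul, Real.exp_log two_pos,
        one_div, inv_pow]

end HardCore
end
end
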